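/- arXiv:1411.4587 — 7 statements merged into one kernel-verified Lean document; each statement's English description precedes it below -/
import Mathlib

section
/- The number of different increasing bilabellings of a rooted tree T of size n with distinguishable nodes (i.e., assignments of the labels {1,...,2n} into disjoint 2-element sets, one per node, such that every label of a child node exceeds every label of its parent) equals (2n)! divided by the product over all vertices v of T of 2h_v(2h_v - 1), where h_v is the number of descendants of v including v itself. -/
/-!
Order the vertices by ancestry (`u ≤ v` iff `u = parent^[k] v`) and replace each vertex `v` by
the two-element chain `(v, 0) < (v, 1)`, i.e. pass to the lexicographic order on `V ×ₗ Fin 2`.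
Sorting each label set, an increasing bilabelling is the same thing as a linear extension of
`V ×ₗ Fin 2`, an order-preserving bijection onto `Fin (2n)`. This poset is again a forest (every
principal down-set is a chain), and the up-sets of `(v, 0)` and `(v, 1)` have `2 h_v` and
`2 h_v - 1` elements. The count then follows from the hook-length formula for forests,
`e(P) · ∏ₓ |{y | x ≤ y}| = |P|!`, proved by induction on `|P|`: the smallest label sits on a
minimal element `t`, deleting `t` changes no other up-set, and since the up-sets of the minimal
elements partition `P`, summing over `t` gives `∑ₜ |{y | t ≤ y}| · (|P| - 1)! = |P|!`.
-/

open Finset Nat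

namespace Equiv

variable {α β : Type*} [DecidableEq α] [DecidableEq β]

def restrictNe (a : α) (b : β) : {g : α ≃ β // g a = b} ≃ ({x // x ≠ a} ≃ {y // y ≠ b}) where
  toFun g := g.1.subtypeEquiv fun _ => (g.1.injective.ne_iff' g.2).symm
  invFun g := ⟨(optionSubtypeNe a).symm.trans (g.optionCongr.trans (optionSubtypeNe b)), by simp⟩
  left_inv g := by
    ext x
    by_cases hx : x = a
    · subst hx
      simp [g.2]
    · simp [optionSubtypeNe_symm_of_ne hx]
  right_inv g := by
    ext x
    simp [optionSubtypeNe_symm_of_ne x.2]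

end Equiv

lemma Fintype.card_subtype_ne {α : Type*} [Fintype α] [DecidableEq α] (a : α) :
    Fintype.card {x // x ≠ a} = Fintype.card α - 1 := by
  rw [Fintype.card_subtype_compl, Fintype.card_subtype_eq]

lemma Fin.ncard_Ici {k : ℕ} (i : Fin k) : (Set.Ici i).ncard = k - i := by
  rw [Set.ncard_eq_toFinset_card', Set.toFinset_Ici, Fin.card_Ici]

section HookLengthFormula

variable {P : Type*} [PartialOrder P]

lemma IsMin.eq_of_le_of_isChain_Iic {t t' x : P} (ht : IsMin t) (ht' : IsMin t')
    (hx : IsChain (· ≤ ·) (Set.Iic x)) (htx : t ≤ x) (htx' : t' ≤ x) : t = t' := by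
  rcases hx.total htx htx' with h | h
  · exact (ht' h).antisymm h |>.symm
  · exact (ht h).antisymm h

lemma exists_isMin_le [Finite P] (x : P) : ∃ t ≤ x, IsMin t := by
  obtain ⟨t, htx, ht⟩ := exists_minimal_le_of_wellFoundedLT (fun _ => True) x trivial
  exact ⟨t, htx, by simpa using ht⟩

lemma sum_ncard_Ici_isMin [Fintype P] [DecidablePred (IsMin : P → Prop)]
    (hP : ∀ x : P, IsChain (· ≤ ·) (Set.Iic x)) :
    ∑ t : {t : P // IsMin t}, (Set.Ici t.1).ncard = Fintype.card P := by
  classical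
  have hIci (t : P) : (Set.Ici t).ncard = ∑ x : P, if t ≤ x then 1 else 0 := by
    rw [← Finset.card_filter, ← Set.ncard_coe_finset]
    congr 1
    ext
    simp
  have hunique (x : P) : (∑ t : {t : P // IsMin t}, if t.1 ≤ x then 1 else 0) = 1 := by
    obtain ⟨t, htx, ht⟩ := exists_isMin_le x
    rw [← Finset.card_filter, Finset.card_eq_one]
    refine ⟨⟨t, ht⟩, Finset.ext fun t' => ?_⟩
    simp only [Finset.mem_filter, Finset.mem_univ, true_and, Finset.mem_singleton]
    exact ⟨fun ht'x => Subtype.ext (t'.2.eq_of_le_of_isChain_Iic ht (hP x) ht'x htx),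
      fun h => h ▸ htx⟩
  simp_rw [hIci]
  rw [Finset.sum_comm, Fintype.card_eq_sum_ones]
  exact Finset.sum_congr rfl fun x _ => hunique x

lemma IsMin.ncard_Ici_subtype_ne {t : P} (ht : IsMin t) (x : {x // x ≠ t}) :
    (Set.Ici x).ncard = (Set.Ici x.1).ncard := by
  have himage : Subtype.val '' Set.Ici x = Set.Ici x.1 := by
    ext y
    refine ⟨fun ⟨y, hy, hyx⟩ => hyx ▸ hy, fun hy => ⟨⟨y, ?_⟩, hy, rfl⟩⟩
    rintro rfl
    exact x.2 ((ht hy).antisymm hy).symm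
  rw [← himage, Set.ncard_image_of_injective _ Subtype.val_injective]

variable {L : Type*} [LinearOrder L]

def strictMonoEquivSigmaIsMin {b : L} (hb : ∀ y, b ≤ y) :
    {g : P ≃ L // StrictMono g} ≃
      Σ t : {t : P // IsMin t}, {g : P ≃ L // StrictMono g ∧ g t = b} where
  toFun g := ⟨⟨g.1.symm b, fun x hx => by
      have := g.2.monotone hx
      rw [Equiv.apply_symm_apply] at this
      exact (g.1.symm_apply_eq.2 (le_antisymm this (hb _)).symm).le⟩,
    g.1, g.2, g.1.apply_symm_apply b⟩
  invFun g := ⟨g.2.1, g.2.2.1⟩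
  left_inv _ := rfl
  right_inv := by
    rintro ⟨⟨t, ht⟩, g, hg, hgt⟩
    obtain rfl : g.symm b = t := g.symm_apply_eq.2 hgt.symm
    rfl

lemma strictMono_iff_restrictNe [DecidableEq P] {t : P} (ht : IsMin t) {b : L} (hb : ∀ y, b ≤ y)
    (g : {g : P ≃ L // g t = b}) :
    StrictMono g.1 ↔ StrictMono (Equiv.restrictNe t b g) := by
  refine ⟨fun h x y hxy => h hxy, fun h x y hxy => ?_⟩
  by_cases hx : x = t
  · subst hx
    rw [g.2]
    exact (hb _).lt_of_ne fun hy => hxy.ne' (g.1.injective (hy.symm.trans g.2.symm))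
  · have hy : y ≠ t := fun hy => (ht (hy ▸ hxy.le)).not_gt (hy ▸ hxy)
    exact h (show (⟨x, hx⟩ : {x // x ≠ t}) < ⟨y, hy⟩ from hxy)

lemma card_strictMono_apply_eq_min [DecidableEq P] {t : P} (ht : IsMin t) {b : L}
    (hb : ∀ y, b ≤ y) :
    Nat.card {g : P ≃ L // StrictMono g ∧ g t = b} =
      Nat.card {g : {x // x ≠ t} ≃ {y // y ≠ b} // StrictMono g} := by
  classical
  exact Nat.card_congr <| (Equiv.subtypeEquivRight fun _ => and_comm).trans <|
    (Equiv.subtypeSubtypeEquivSubtypeInter (fun g : P ≃ L => g t = b) (StrictMono ·)).symm.trans <|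
    Equiv.subtypeEquiv (Equiv.restrictNe t b) (strictMono_iff_restrictNe ht hb)

theorem card_strictMono_equiv_mul_prod_ncard_Ici [Fintype P] [Fintype L]
    (hP : ∀ x : P, IsChain (· ≤ ·) (Set.Iic x)) (hcard : Fintype.card P = Fintype.card L) :
    Nat.card {g : P ≃ L // StrictMono g} * (∏ x : P, (Set.Ici x).ncard) = (Fintype.card P)! := by
  classical
  induction hN : Fintype.card P generalizing P L with
  | zero =>
    have : IsEmpty P := Fintype.card_eq_zero_iff.1 hN
    have : IsEmpty L := Fintype.card_eq_zero_iff.1 (hcard ▸ hN)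
    simp only [Finset.univ_eq_empty, Finset.prod_empty, mul_one, Nat.factorial_zero]
    exact Nat.card_eq_one_iff_exists.2
      ⟨⟨Equiv.equivOfIsEmpty P L, isEmptyElim⟩, fun g => Subtype.ext (Equiv.ext isEmptyElim)⟩
  | succ m ih =>
    have : Nonempty L := Fintype.card_pos_iff.1 (by omega)
    obtain ⟨b, hb⟩ : ∃ b : L, ∀ y, b ≤ y := Finite.exists_min id
    have hsub (t : {t : P // IsMin t}) :
        Nat.card {g : {x // x ≠ t.1} ≃ {y // y ≠ b} // StrictMono g} *
          (∏ x : {x // x ≠ t.1}, (Set.Ici x).ncard) = m ! :=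
      ih (fun x y hy z hz hyz => hP x.1 hy hz (Subtype.coe_injective.ne hyz))
        (by simp only [Fintype.card_subtype_ne, hcard]) (by rw [Fintype.card_subtype_ne, hN]; rfl)
    calc Nat.card {g : P ≃ L // StrictMono g} * (∏ x : P, (Set.Ici x).ncard)
        = ∑ t : {t : P // IsMin t}, (Set.Ici t.1).ncard * m ! := by
          rw [Nat.card_congr (strictMonoEquivSigmaIsMin hb), Nat.card_sigma, Finset.sum_mul]
          refine Finset.sum_congr rfl fun t _ => ?_
          rw [Fintype.prod_eq_mul_prod_subtype_ne _ t.1, card_strictMono_apply_eq_min t.2 hb,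
            mul_left_comm, ← hsub t]
          congr 2
          exact Finset.prod_congr rfl fun x _ => (t.2.ncard_Ici_subtype_ne x).symm
      _ = (m + 1)! := by rw [← Finset.sum_mul, sum_ncard_Ici_isMin hP, hN, Nat.factorial_succ]

end HookLengthFormula

section Lex

variable {P C : Type*} [PartialOrder P] [LinearOrder C]

lemma isChain_Iic_lex (hP : ∀ x : P, IsChain (· ≤ ·) (Set.Iic x)) (x : P ×ₗ C) :
    IsChain (· ≤ ·) (Set.Iic x) := by
  intro y hy z hz _
  simp only [Set.mem_Iic, Prod.Lex.le_iff'] at hy hz ⊢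
  rcases eq_or_ne (ofLex y).1 (ofLex z).1 with h | h
  · rcases le_total (ofLex y).2 (ofLex z).2 with h' | h'
    · exact Or.inl ⟨h.le, fun _ => h'⟩
    · exact Or.inr ⟨h.ge, fun _ => h'⟩
  · rcases hP _ hy.1 hz.1 h with h' | h'
    · exact Or.inl ⟨h', fun e => absurd e h⟩
    · exact Or.inr ⟨h', fun e => absurd e.symm h⟩

lemma Ici_toLex (a : P) (c : C) :
    Set.Ici (toLex (a, c)) = toLex '' (Set.Ioi a ×ˢ Set.univ ∪ {a} ×ˢ Set.Ici c) := by
  ext z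
  obtain ⟨z, rfl⟩ := toLex.surjective z
  simp [Prod.Lex.toLex_le_toLex, eq_comm]

lemma ncard_Ici_toLex [Finite P] [Finite C] (a : P) (c : C) :
    (Set.Ici (toLex (a, c))).ncard = Nat.card C * (Set.Ioi a).ncard + (Set.Ici c).ncard := by
  rw [Ici_toLex, Set.ncard_image_of_injective _ toLex.injective,
    Set.ncard_union_eq (Set.disjoint_left.2 fun _ h h' => (h.1.ne' h'.1).elim) (Set.toFinite _)
      (Set.toFinite _),
    Set.ncard_prod, Set.ncard_prod, Set.ncard_univ, Set.ncard_singleton, one_mul, mul_comm]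

lemma prod_ncard_Ici_toLex_fin_two [Finite P] (a : P) :
    ∏ i : Fin 2, ((Set.Ici (toLex (a, i))).ncard : ℚ) =
      2 * (Set.Ici a).ncard * (2 * (Set.Ici a).ncard - 1) := by
  rw [← Set.Ioi_insert, Set.ncard_insert_of_notMem Set.self_notMem_Ioi, Fin.prod_univ_two,
    ncard_Ici_toLex, ncard_Ici_toLex, Fin.ncard_Ici, Fin.ncard_Ici, Nat.card_fin]
  simp only [Fin.val_zero, Fin.val_one]
  push_cast
  ring

end Lex

section Labelling

variable {P L : Type*} [Preorder P] [LinearOrder L] {k : ℕ}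

def IsIncreasingLabelling (k : ℕ) (ℓ : P → Finset L) : Prop :=
  (∀ v, (ℓ v).card = k) ∧ (∀ v w, v ≠ w → Disjoint (ℓ v) (ℓ w)) ∧ (∀ x, ∃ v, x ∈ ℓ v) ∧
    ∀ v w, v < w → ∀ a ∈ ℓ v, ∀ b ∈ ℓ w, a < b

lemma isIncreasingLabelling_image {g : P ×ₗ Fin k ≃ L} (hg : StrictMono g) :
    IsIncreasingLabelling k fun v => univ.image fun i => g (toLex (v, i)) := by
  refine ⟨fun v => ?_, fun v w hvw => ?_, fun x => ?_, fun v w hvw => ?_⟩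
  · rw [card_image_of_injective _ fun i j hij => by simpa using g.injective hij, Finset.card_fin]
  · refine disjoint_left.2 fun a ha hb => hvw ?_
    obtain ⟨i, -, rfl⟩ := mem_image.1 ha
    obtain ⟨j, -, hj⟩ := mem_image.1 hb
    exact congrArg (·.1) (g.injective hj).symm
  · obtain ⟨⟨v, i⟩, hvi⟩ := toLex.surjective (g.symm x)
    exact ⟨v, mem_image.2 ⟨i, mem_univ i, by rw [hvi, g.apply_symm_apply]⟩⟩
  · simp only [mem_image, mem_univ, true_and, forall_exists_index, forall_apply_eq_imp_iff]
    exact fun i j => hg (Prod.Lex.toLex_lt_toLex.2 (Or.inl hvw))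

variable {ℓ : P → Finset L}

namespace IsIncreasingLabelling

noncomputable def sortedLabel (hℓ : IsIncreasingLabelling k ℓ) (x : P ×ₗ Fin k) : L :=
  (ℓ (ofLex x).1).orderEmbOfFin (hℓ.1 _) (ofLex x).2

variable (hℓ : IsIncreasingLabelling k ℓ)
include hℓ

lemma sortedLabel_toLex (v : P) (i : Fin k) :
    hℓ.sortedLabel (toLex (v, i)) = (ℓ v).orderEmbOfFin (hℓ.1 v) i := rfl

lemma sortedLabel_bijective : Function.Bijective hℓ.sortedLabel := by
  refine ⟨fun x y hxy => ?_, fun a => ?_⟩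
  · obtain ⟨⟨v, i⟩, rfl⟩ := toLex.surjective x
    obtain ⟨⟨w, j⟩, rfl⟩ := toLex.surjective y
    rw [sortedLabel_toLex, sortedLabel_toLex] at hxy
    obtain rfl : v = w := by
      by_contra hvw
      refine disjoint_left.1 (hℓ.2.1 v w hvw) (orderEmbOfFin_mem _ (hℓ.1 v) i) ?_
      exact hxy ▸ orderEmbOfFin_mem _ (hℓ.1 w) j
    rw [(orderEmbOfFin _ _).injective hxy]
  · obtain ⟨v, hv⟩ := hℓ.2.2.1 a
    rw [← Finset.mem_coe, ← range_orderEmbOfFin _ (hℓ.1 v)] at hv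
    obtain ⟨i, hi⟩ := hv
    exact ⟨toLex (v, i), hi⟩

lemma strictMono_sortedLabel : StrictMono hℓ.sortedLabel := by
  intro x y hxy
  obtain ⟨⟨v, i⟩, rfl⟩ := toLex.surjective x
  obtain ⟨⟨w, j⟩, rfl⟩ := toLex.surjective y
  rw [sortedLabel_toLex, sortedLabel_toLex]
  rcases Prod.Lex.toLex_lt_toLex.1 hxy with hvw | ⟨rfl, hij⟩
  · exact hℓ.2.2.2 v w hvw _ (orderEmbOfFin_mem _ _ i) _ (orderEmbOfFin_mem _ _ j)
  · exact (orderEmbOfFin _ _).strictMono hij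

end IsIncreasingLabelling

noncomputable def strictMonoEquivIncreasingLabelling :
    {g : P ×ₗ Fin k ≃ L // StrictMono g} ≃ {ℓ : P → Finset L // IsIncreasingLabelling k ℓ} where
  toFun g := ⟨_, isIncreasingLabelling_image g.2⟩
  invFun ℓ := ⟨Equiv.ofBijective _ ℓ.2.sortedLabel_bijective, ℓ.2.strictMono_sortedLabel⟩
  left_inv g := by
    ext x
    obtain ⟨⟨v, i⟩, rfl⟩ := toLex.surjective x
    have hmono : StrictMono fun i => g.1 (toLex (v, i)) :=
      g.2.comp fun i j hij => Prod.Lex.toLex_lt_toLex.2 (Or.inr ⟨rfl, hij⟩)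
    exact congrFun (orderEmbOfFin_unique ((isIncreasingLabelling_image g.2).1 v)
      (fun i => mem_image_of_mem _ (mem_univ i)) hmono).symm i
  right_inv ℓ := by
    ext1
    funext v
    exact image_orderEmbOfFin_univ (ℓ.1 v) (ℓ.2.1 v)

end Labelling

section ParentMap

variable {V : Type*} (p : V → V)

abbrev ancestorOrder (hp : ∀ v k, p^[k + 1] v = v → p v = v) : PartialOrder V where
  le u v := ∃ k, p^[k] v = u
  le_refl v := ⟨0, rfl⟩
  le_trans u v w := fun ⟨j, hj⟩ ⟨k, hk⟩ => ⟨j + k, by rw [Function.iterate_add_apply, hk, hj]⟩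
  le_antisymm u v := by
    rintro ⟨j, rfl⟩ ⟨k, hk⟩
    rw [← Function.iterate_add_apply] at hk
    rcases j with _ | j
    · rfl
    · rw [← add_assoc] at hk
      exact Function.iterate_fixed (hp v _ hk) _

variable {p} [PartialOrder V] (hle : ∀ u v : V, u ≤ v ↔ ∃ k, p^[k] v = u)
include hle

lemma isChain_Iic_of_le_iff_exists_iterate (x : V) : IsChain (· ≤ ·) (Set.Iic x) := by
  rintro u hu v hv -
  obtain ⟨j, rfl⟩ := (hle u x).1 hu
  obtain ⟨k, rfl⟩ := (hle v x).1 hv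
  rcases le_total j k with hjk | hkj
  · exact Or.inr ((hle _ _).2 ⟨k - j, by rw [← Function.iterate_add_apply, Nat.sub_add_cancel hjk]⟩)
  · exact Or.inl ((hle _ _).2 ⟨j - k, by rw [← Function.iterate_add_apply, Nat.sub_add_cancel hkj]⟩)

lemma forall_lt_iff_forall_parent {R : V → V → Prop} (hR : ∀ u v w, R u v → R v w → R u w) :
    (∀ u v, u < v → R u v) ↔ ∀ w, p w ≠ w → R (p w) w := by
  refine ⟨fun h w hw => h _ _ (lt_of_le_of_ne ((hle _ _).2 ⟨1, rfl⟩) hw), fun h u v huv => ?_⟩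
  obtain ⟨k, rfl⟩ := (hle u v).1 huv.le
  induction k generalizing v with
  | zero => exact absurd huv (lt_irrefl _)
  | succ k ih =>
    have hv : p v ≠ v := fun hv => huv.ne (Function.iterate_fixed hv _)
    rw [Function.iterate_succ_apply] at huv ⊢
    by_cases hk : p^[k] (p v) = p v
    · rw [hk]
      exact h v hv
    · exact hR _ _ _ (ih (p v) (lt_of_le_of_ne ((hle _ _).2 ⟨k, rfl⟩) hk)) (h v hv)

end ParentMap

section RootedTree

variable {V : Type*} {p : V → V} {r : V} (hroot : p r = r) (hreach : ∀ v, ∃ k, p^[k] v = r)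
include hroot hreach

lemma eq_root_of_isPeriodicPt {v : V} {k : ℕ} (hk : 0 < k) (hv : p^[k] v = v) : v = r := by
  obtain ⟨j, hj⟩ := hreach v
  have hjk : j ≤ k * j := Nat.le_mul_of_pos_left j hk
  calc v = p^[k * j] v := ((Function.IsPeriodicPt.mul_const hv j).eq).symm
    _ = p^[k * j - j] (p^[j] v) := by rw [← Function.iterate_add_apply, Nat.sub_add_cancel hjk]
    _ = r := by rw [hj, Function.iterate_fixed hroot]

lemma parent_eq_self_iff {w : V} : p w = w ↔ w = r :=
  ⟨eq_root_of_isPeriodicPt hroot hreach one_pos, fun h => h ▸ hroot⟩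

lemma isIncreasingLabelling_iff_forall_ne_root [PartialOrder V]
    (hle : ∀ u v : V, u ≤ v ↔ ∃ k, p^[k] v = u)
    {L : Type*} [LinearOrder L] {k : ℕ} (hk : 0 < k) (ℓ : V → Finset L) :
    IsIncreasingLabelling k ℓ ↔ (∀ v, (ℓ v).card = k) ∧ (∀ v w, v ≠ w → Disjoint (ℓ v) (ℓ w)) ∧
      (∀ x, ∃ v, x ∈ ℓ v) ∧ ∀ w, w ≠ r → ∀ a ∈ ℓ (p w), ∀ b ∈ ℓ w, a < b := by
  refine and_congr_right fun hcard => and_congr_right fun _ => and_congr_right fun _ => ?_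
  have htrans (u v w : V) (huv : ∀ a ∈ ℓ u, ∀ b ∈ ℓ v, a < b) (hvw : ∀ b ∈ ℓ v, ∀ c ∈ ℓ w, b < c) :
      ∀ a ∈ ℓ u, ∀ c ∈ ℓ w, a < c := by
    obtain ⟨b, hb⟩ := card_pos.1 (hcard v ▸ hk)
    exact fun a ha c hc => (huv a ha b hb).trans (hvw b hb c hc)
  simp_rw [forall_lt_iff_forall_parent hle htrans, ne_eq, parent_eq_self_iff hroot hreach]

end RootedTree

/-- The number of increasing bilabellings of a rooted tree `T` of size `n`
(with distinguishable nodes) equals `(2n)! / ∏_v (2 h_v (2 h_v - 1))`.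

The rooted tree is modelled by a finite vertex type `V` with a parent function:
`parent r = r` for the root `r`, and every vertex reaches the root by iterating
`parent`.  The hook-length `h v` is the number of descendants of `v`
(vertices `u` such that `v` lies on the path from the root to `u`),
including `v` itself. -/
theorem increasing_bilabellings_count
    (V : Type) [Fintype V] (r : V) (parent : V → V)
    (hroot : parent r = r)
    (hreach : ∀ v : V, ∃ k : ℕ, parent^[k] v = r)
    (n : ℕ) (hn : n = Fintype.card V)
    (h : V → ℕ) (hh : ∀ v : V, h v = Set.ncard {u : V | ∃ k : ℕ, parent^[k] u = v}) :
    (Nat.card {ℓ : V → Finset (Fin (2 * n)) //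
        (∀ v : V, (ℓ v).card = 2) ∧
        (∀ v w : V, v ≠ w → Disjoint (ℓ v) (ℓ w)) ∧
        (∀ x : Fin (2 * n), ∃ v : V, x ∈ ℓ v) ∧
        (∀ w : V, w ≠ r → ∀ a ∈ ℓ (parent w), ∀ b ∈ ℓ w, a < b)} : ℚ)
      = (Nat.factorial (2 * n) : ℚ) / ∏ v : V, ((2 * h v) * (2 * h v - 1) : ℚ) := by
  let _ : PartialOrder V := ancestorOrder parent fun v k hv =>
    (eq_root_of_isPeriodicPt hroot hreach k.succ_pos hv).symm ▸ hroot
  have hle (u v : V) : u ≤ v ↔ ∃ k, parent^[k] v = u := Iff.rfl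
  have hiff := isIncreasingLabelling_iff_forall_ne_root (L := Fin (2 * n)) hroot hreach hle two_pos
  have hlabel := Nat.card_congr <|
    (Equiv.subtypeEquivRight hiff).symm.trans (strictMonoEquivIncreasingLabelling (k := 2)).symm
  have hcard : Fintype.card (V ×ₗ Fin 2) = Fintype.card (Fin (2 * n)) := by simp [hn, mul_comm]
  have hhook := card_strictMono_equiv_mul_prod_ncard_Ici
    (isChain_Iic_lex (isChain_Iic_of_le_iff_exists_iterate hle)) hcard
  have hprod :
      ∏ x : V ×ₗ Fin 2, ((Set.Ici x).ncard : ℚ) = ∏ v, ((2 * h v) * (2 * h v - 1) : ℚ) := by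
    rw [← Fintype.prod_equiv toLex (fun x => ((Set.Ici (toLex x)).ncard : ℚ)) _ fun _ => rfl,
      Fintype.prod_prod_type]
    exact Finset.prod_congr rfl fun v _ => by rw [prod_ncard_Ici_toLex_fin_two, hh v]; rfl
  have hpos : (0 : ℚ) < ∏ x : V ×ₗ Fin 2, ((Set.Ici x).ncard : ℚ) := prod_pos fun x _ => by
    exact_mod_cast (Set.ncard_pos (Set.toFinite _)).2 ⟨x, Set.self_mem_Ici⟩
  rw [hlabel, ← hprod, eq_div_iff hpos.ne']
  exact_mod_cast hhook.trans (by rw [hcard, Fintype.card_fin])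
end

section
/- The number of different increasing k-labellings of a rooted tree T of size n with distinguishable nodes equals (kn)! divided by the product over all vertices v of T of the falling factorial (k·h_v)(k·h_v - 1)···(k·h_v - k + 1), where h_v is the hook-length of v. -/
open Finset

section UpDown
variable {N : ℕ}

/-- Shift a finset of `Fin N` up into `Fin (N + 1)`. -/
def up (s : Finset (Fin N)) : Finset (Fin (N + 1)) := s.map ⟨Fin.succ, Fin.succ_injective N⟩

/-- Shift a finset of `Fin (N + 1)` down into `Fin N`, dropping `0`. -/
def down (s : Finset (Fin (N + 1))) : Finset (Fin N) := Finset.univ.filter fun y => y.succ ∈ s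

@[simp] lemma mem_down {s : Finset (Fin (N + 1))} {y : Fin N} : y ∈ down s ↔ y.succ ∈ s := by
  simp [down]

@[simp] lemma succ_mem_up {s : Finset (Fin N)} {y : Fin N} : y.succ ∈ up s ↔ y ∈ s := by simp [up]

@[simp] lemma zero_not_mem_up (s : Finset (Fin N)) : (0 : Fin (N + 1)) ∉ up s := by
  simp only [up, Finset.mem_map, Function.Embedding.coeFn_mk]
  rintro ⟨a, -, ha⟩; exact (Fin.succ_ne_zero a) ha

lemma mem_up {s : Finset (Fin N)} {x : Fin (N + 1)} : x ∈ up s ↔ ∃ y ∈ s, y.succ = x := by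
  simp [up]

@[simp] lemma down_up (s : Finset (Fin N)) : down (up s) = s := by ext y; simp

lemma up_down (s : Finset (Fin (N + 1))) : up (down s) = s.erase 0 := by
  ext x; refine Fin.cases ?_ (fun y => ?_) x
  · simp
  · simp [Fin.succ_ne_zero]

@[simp] lemma card_up (s : Finset (Fin N)) : (up s).card = s.card := Finset.card_map _

lemma card_down_of_not_mem {s : Finset (Fin (N + 1))} (h : (0 : Fin (N + 1)) ∉ s) :
    (down s).card = s.card := by
  rw [← card_up (down s), up_down, Finset.erase_eq_of_notMem h]

lemma card_down_of_mem {s : Finset (Fin (N + 1))} (h : (0 : Fin (N + 1)) ∈ s) :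
    (down s).card = s.card - 1 := by
  rw [← card_up (down s), up_down, Finset.card_erase_of_mem h]
end UpDown

lemma mycard_sigma' {W : Type} [Fintype W] (f : W → Type) [∀ v, Finite (f v)] :
    Nat.card (Σ v, f v) = ∑ v, Nat.card (f v) := by
  haveI : ∀ v, Fintype (f v) := fun v => Fintype.ofFinite _
  simp [Nat.card_eq_fintype_card, Fintype.card_sigma]

section Tree
variable {V : Type} [Fintype V] [DecidableEq V] (parent : V → V)

open Classical in
/-- The subtree (set of descendants, including itself) of `v`. -/
noncomputable def sub (v : V) : Finset V :=
  Finset.univ.filter fun u => ∃ j : ℕ, parent^[j] u = v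

open Classical in
lemma mem_sub {v u : V} : u ∈ sub parent v ↔ ∃ j : ℕ, parent^[j] u = v := by simp [sub]

lemma self_mem_sub (v : V) : v ∈ sub parent v := (mem_sub parent).2 ⟨0, rfl⟩

/-- Total weight of the subtree of `v`. -/
noncomputable def wt (c : V → ℕ) (v : V) : ℕ := ∑ u ∈ sub parent v, c u

lemma le_wt (c : V → ℕ) (v : V) : c v ≤ wt parent c v :=
  Finset.single_le_sum (fun _ _ => Nat.zero_le _) (self_mem_sub parent v)

open Classical in
/-- The eligible vertices: positive weight, all strict ancestors of weight zero. -/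
noncomputable def elig (c : V → ℕ) : Finset V :=
  Finset.univ.filter fun v => c v ≠ 0 ∧ ∀ u, u ≠ v → (∃ j, parent^[j] v = u) → c u = 0

open Classical in
lemma mem_elig {c : V → ℕ} {v : V} :
    v ∈ elig parent c ↔ c v ≠ 0 ∧ ∀ u, u ≠ v → (∃ j, parent^[j] v = u) → c u = 0 := by
  simp [elig]

lemma iterate_stable {r : V} (hroot : parent r = r) {u : V} {jr : ℕ}
    (h : parent^[jr] u = r) (t : ℕ) : parent^[jr + t] u = r := by
  induction t with
  | zero => simpa using h
  | succ t ih => rw [← Nat.add_assoc, Function.iterate_succ_apply', ih, hroot]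

lemma exists_unique_elig {r : V} (hroot : parent r = r)
    (hreach : ∀ v : V, ∃ j : ℕ, parent^[j] v = r) {c : V → ℕ} {u : V} (hu : c u ≠ 0) :
    ∃! v, v ∈ elig parent c ∧ u ∈ sub parent v := by
  classical
  obtain ⟨jr, hjr⟩ := hreach u
  set S : Finset ℕ := (Finset.range (jr + 1)).filter fun j => c (parent^[j] u) ≠ 0 with hS
  have h0S : 0 ∈ S := by simp [hS, hu]
  have hSne : S.Nonempty := ⟨0, h0S⟩
  set j₀ := S.max' hSne with hj₀
  have hj₀S : j₀ ∈ S := S.max'_mem hSne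
  have hj₀le : j₀ ≤ jr := by
    have := Finset.mem_range.1 (Finset.mem_filter.1 hj₀S).1; omega
  have hcj₀ : c (parent^[j₀] u) ≠ 0 := (Finset.mem_filter.1 hj₀S).2
  refine ⟨parent^[j₀] u, ⟨(mem_elig parent).2 ⟨hcj₀, ?_⟩, (mem_sub parent).2 ⟨j₀, rfl⟩⟩, ?_⟩
  · rintro w hw ⟨i, hi⟩
    rw [← Function.iterate_add_apply] at hi
    by_contra hcw
    by_cases hle : i + j₀ ≤ jr
    · have : i + j₀ ∈ S := by
        simp only [hS, Finset.mem_filter, Finset.mem_range]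
        exact ⟨by omega, hi ▸ hcw⟩
      have : i + j₀ ≤ j₀ := S.le_max' _ this
      have : i = 0 := by omega
      exact hw (by rw [← hi, this, Nat.zero_add])
    · have hwr : w = r := by
        rw [← hi]
        have : i + j₀ = jr + (i + j₀ - jr) := by omega
        rw [this]; exact iterate_stable parent hroot hjr _
      have hjrS : jr ∈ S := by
        simp only [hS, Finset.mem_filter, Finset.mem_range]
        exact ⟨by omega, by rw [hjr, ← hwr]; exact hcw⟩
      have : jr ≤ j₀ := S.le_max' _ hjrS
      have : j₀ = jr := by omega
      apply hw; rw [hwr, this]; exact hjr.symm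
  · rintro v' ⟨hv'e, hv's⟩
    obtain ⟨j', hj'⟩ := (mem_sub parent).1 hv's
    have helig := ((mem_elig parent).1 hv'e)
    rcases le_or_gt j' j₀ with hle | hlt
    · by_contra hne
      have hit : parent^[j₀ - j'] v' = parent^[j₀] u := by
        rw [← hj', ← Function.iterate_add_apply]
        congr 1; omega
      exact hcj₀ (helig.2 _ (fun hh => hne hh.symm) ⟨_, hit⟩)
    · by_contra hne
      by_cases hle2 : j' ≤ jr
      · have : j' ∈ S := by
          simp only [hS, Finset.mem_filter, Finset.mem_range]
          exact ⟨by omega, by rw [hj']; exact helig.1⟩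
        have := S.le_max' _ this; omega
      · have hv'r : v' = r := by
          rw [← hj', show j' = jr + (j' - jr) by omega]
          exact iterate_stable parent hroot hjr _
        have : jr ∈ S := by
          simp only [hS, Finset.mem_filter, Finset.mem_range]
          exact ⟨by omega, by rw [hjr, ← hv'r]; exact helig.1⟩
        have := S.le_max' _ this
        have hj : j₀ = jr := by omega
        exact hne (by rw [hv'r, ← hjr, ← hj])

lemma sum_wt_elig {r : V} (hroot : parent r = r)
    (hreach : ∀ v : V, ∃ j : ℕ, parent^[j] v = r) (c : V → ℕ) :
    ∑ v ∈ elig parent c, wt parent c v = ∑ u, c u := by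
  classical
  have : ∑ v ∈ elig parent c, wt parent c v
      = ∑ v ∈ elig parent c, ∑ u : V, if u ∈ sub parent v then c u else 0 := by
    refine Finset.sum_congr rfl fun v _ => ?_
    rw [wt, Finset.sum_ite_mem, Finset.univ_inter]
  rw [this, Finset.sum_comm]
  refine Finset.sum_congr rfl fun u _ => ?_
  by_cases hu : c u = 0
  · simp [hu]
  · obtain ⟨v₀, hv₀, huniq⟩ := exists_unique_elig parent hroot hreach hu
    rw [Finset.sum_eq_single v₀
      (fun x hx hxne => if_neg (fun hmem => hxne (huniq x ⟨hx, hmem⟩)))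
      (fun habs => absurd hv₀.1 habs)]
    exact if_pos hv₀.2

/-- The predicate of being a valid increasing labelling with label multiplicities `c`,
with the monotonicity condition stated for all strict ancestors. -/
def IsLab {N : ℕ} (c : V → ℕ) (ℓ : V → Finset (Fin N)) : Prop :=
  (∀ v, (ℓ v).card = c v) ∧ (∀ v w, v ≠ w → Disjoint (ℓ v) (ℓ w)) ∧
  (∀ x, ∃ v, x ∈ ℓ v) ∧
  (∀ v w, v ≠ w → (∃ j, parent^[j] w = v) → ∀ a ∈ ℓ v, ∀ b ∈ ℓ w, a < b)

lemma isLab_down {N : ℕ} {c : V → ℕ} {ℓ : V → Finset (Fin (N + 1))} {v₀ : V}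
    (hℓ : IsLab parent c ℓ) (h0 : (0 : Fin (N + 1)) ∈ ℓ v₀) :
    IsLab parent (Function.update c v₀ (c v₀ - 1)) (fun u => down (ℓ u)) := by
  obtain ⟨hcard, hdisj, hcov, hmono⟩ := hℓ
  refine ⟨fun u => ?_, fun v w hvw => ?_, fun x => ?_, ?_⟩
  · by_cases hu : u = v₀
    · subst hu
      rw [card_down_of_mem h0, hcard, Function.update_self]
    · rw [Function.update_of_ne hu]
      have h0u : (0 : Fin (N + 1)) ∉ ℓ u :=
        fun hmem => (Finset.disjoint_left.1 (hdisj u v₀ hu)) hmem h0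
      rw [card_down_of_not_mem h0u, hcard]
  · rw [Finset.disjoint_left]
    intro y hy hy'
    exact (Finset.disjoint_left.1 (hdisj v w hvw)) (mem_down.1 hy) (mem_down.1 hy')
  · obtain ⟨v, hv⟩ := hcov x.succ
    exact ⟨v, mem_down.2 hv⟩
  · rintro v w hvw hanc a ha b hb
    have := hmono v w hvw hanc _ (mem_down.1 ha) _ (mem_down.1 hb)
    exact Fin.succ_lt_succ_iff.1 this

lemma isLab_up {N : ℕ} {c : V → ℕ} {ℓ' : V → Finset (Fin N)} {v₀ : V}
    (hv₀ : v₀ ∈ elig parent c)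
    (hℓ' : IsLab parent (Function.update c v₀ (c v₀ - 1)) ℓ') :
    IsLab parent c
      (fun u => if u = v₀ then insert 0 (up (ℓ' u)) else up (ℓ' u)) ∧
      (0 : Fin (N + 1)) ∈ (fun u => if u = v₀ then insert 0 (up (ℓ' u)) else up (ℓ' u)) v₀ := by
  obtain ⟨hcard, hdisj, hcov, hmono⟩ := hℓ'
  obtain ⟨hc0, hanc0⟩ := (mem_elig parent).1 hv₀
  have hmemL : ∀ u (x : Fin (N + 1)),
      x ∈ (if u = v₀ then insert 0 (up (ℓ' u)) else up (ℓ' u)) ↔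
        (x = 0 ∧ u = v₀) ∨ ∃ y ∈ ℓ' u, y.succ = x := by
    intro u x
    by_cases hu : u = v₀ <;> simp [hu, mem_up, or_comm]
  refine ⟨⟨fun u => ?_, fun v w hvw => ?_, fun x => ?_, ?_⟩, by simp⟩
  · beta_reduce
    by_cases hu : u = v₀
    · subst hu
      rw [if_pos rfl, Finset.card_insert_of_notMem (zero_not_mem_up _), card_up, hcard,
        Function.update_self]
      omega
    · rw [if_neg hu, card_up, hcard, Function.update_of_ne hu]
  · rw [Finset.disjoint_left]
    intro x hx hx'
    rcases (hmemL v x).1 hx with ⟨hx0, hv⟩ | ⟨y, hy, hyx⟩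
    · rcases (hmemL w x).1 hx' with ⟨_, hw⟩ | ⟨y, hy, hyx⟩
      · exact hvw (hv.trans hw.symm)
      · exact Fin.succ_ne_zero y (hyx.trans hx0)
    · rcases (hmemL w x).1 hx' with ⟨hx0, _⟩ | ⟨y', hy', hyx'⟩
      · exact Fin.succ_ne_zero y (hyx.trans hx0)
      · have : y = y' := Fin.succ_injective _ (hyx.trans hyx'.symm)
        exact (Finset.disjoint_left.1 (hdisj v w hvw)) hy (this ▸ hy')
  · refine Fin.cases ?_ (fun y => ?_) x
    · exact ⟨v₀, (hmemL v₀ 0).2 (Or.inl ⟨rfl, rfl⟩)⟩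
    · obtain ⟨v, hv⟩ := hcov y
      exact ⟨v, (hmemL v y.succ).2 (Or.inr ⟨y, hv, rfl⟩)⟩
  · rintro v w hvw hanc a ha b hb
    rcases (hmemL w b).1 hb with ⟨hb0, hw⟩ | ⟨b', hb', hbb⟩
    · exfalso
      subst hw
      have hcv : c v = 0 := hanc0 v hvw hanc
      have : (ℓ' v).card = 0 := by
        rw [hcard, Function.update_of_ne hvw, hcv]
      rcases (hmemL v a).1 ha with ⟨_, hv⟩ | ⟨y, hy, _⟩
      · exact hvw hv
      · exact Finset.notMem_empty y (Finset.card_eq_zero.1 this ▸ hy)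
    · rcases (hmemL v a).1 ha with ⟨ha0, _⟩ | ⟨a', ha', haa⟩
      · subst ha0; rw [← hbb]; exact Fin.succ_pos b'
      · rw [← hbb, ← haa]
        exact Fin.succ_lt_succ_iff.2 (hmono v w hvw hanc _ ha' _ hb')

lemma card_fiber {N : ℕ} {c : V → ℕ} {v₀ : V} (hv₀ : v₀ ∈ elig parent c) :
    Nat.card {ℓ : V → Finset (Fin (N + 1)) // IsLab parent c ℓ ∧ (0 : Fin (N + 1)) ∈ ℓ v₀}
      = Nat.card {ℓ : V → Finset (Fin N) //
          IsLab parent (Function.update c v₀ (c v₀ - 1)) ℓ} := by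
  apply Nat.card_congr
  refine ⟨fun t => ⟨fun u => down (t.1 u), isLab_down parent t.2.1 t.2.2⟩,
      fun s => ⟨fun u => if u = v₀ then insert 0 (up (s.1 u)) else up (s.1 u),
        (isLab_up parent hv₀ s.2).1, (isLab_up parent hv₀ s.2).2⟩, ?_, ?_⟩
  · rintro ⟨ℓ, hP, h0⟩
    apply Subtype.ext
    funext u
    show (if u = v₀ then insert 0 (up (down (ℓ u))) else up (down (ℓ u))) = ℓ u
    by_cases hu : u = v₀
    · subst hu
      rw [if_pos rfl, up_down, Finset.insert_erase h0]
    · rw [if_neg hu, up_down, Finset.erase_eq_of_notMem]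
      exact fun hmem => (Finset.disjoint_left.1 (hP.2.1 u v₀ hu)) hmem h0
  · rintro ⟨ℓ', hP'⟩
    apply Subtype.ext
    funext u
    show down (if u = v₀ then insert 0 (up (ℓ' u)) else up (ℓ' u)) = ℓ' u
    by_cases hu : u = v₀
    · subst hu
      rw [if_pos rfl]
      ext y
      simp [Fin.succ_ne_zero]
    · rw [if_neg hu, down_up]

lemma card_split {N : ℕ} (c : V → ℕ) :
    Nat.card {ℓ : V → Finset (Fin (N + 1)) // IsLab parent c ℓ}
      = ∑ v₀ ∈ elig parent c,
          Nat.card {ℓ : V → Finset (Fin (N + 1)) //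
            IsLab parent c ℓ ∧ (0 : Fin (N + 1)) ∈ ℓ v₀} := by
  classical
  set T := {ℓ : V → Finset (Fin (N + 1)) // IsLab parent c ℓ} with hT
  haveI : Finite T := Subtype.finite
  set f : T → V := fun t => (t.2.2.2.1 0).choose with hf
  have hfs : ∀ t : T, (0 : Fin (N + 1)) ∈ t.1 (f t) := fun t => (t.2.2.2.1 0).choose_spec
  have huniq : ∀ (t : T) (v : V), (0 : Fin (N + 1)) ∈ t.1 v → f t = v := by
    intro t v hv
    by_contra hne
    exact (Finset.disjoint_left.1 (t.2.2.1 (f t) v hne)) (hfs t) hv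
  have e1 : Nat.card T = ∑ v : V, Nat.card {t : T // f t = v} := by
    rw [← mycard_sigma']
    exact Nat.card_congr (Equiv.sigmaFiberEquiv f).symm
  have e2 : ∀ v : V, Nat.card {t : T // f t = v}
      = Nat.card {ℓ : V → Finset (Fin (N + 1)) //
          IsLab parent c ℓ ∧ (0 : Fin (N + 1)) ∈ ℓ v} := by
    intro v
    apply Nat.card_congr
    refine ⟨fun t => ⟨t.1.1, t.1.2, by obtain ⟨t', ht'⟩ := t; subst ht'; exact hfs t'⟩,
        fun s => ⟨⟨s.1, s.2.1⟩, huniq _ _ s.2.2⟩, fun t => ?_, fun s => ?_⟩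
    · apply Subtype.ext; apply Subtype.ext; rfl
    · apply Subtype.ext; rfl
  rw [e1]
  rw [Finset.sum_congr rfl (fun v _ => e2 v)]
  symm
  apply Finset.sum_subset (Finset.subset_univ _)
  intro v₀ _ hv₀
  rw [mem_elig] at hv₀
  push_neg at hv₀
  rw [Nat.card_eq_zero]
  left
  constructor
  rintro ⟨ℓ, hP, h0⟩
  by_cases hc : c v₀ = 0
  · have : ℓ v₀ = ∅ := Finset.card_eq_zero.1 ((hP.1 v₀).trans hc)
    rw [this] at h0
    exact Finset.notMem_empty _ h0
  · obtain ⟨u, hune, hanc, hcu⟩ := hv₀ hc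
    have : (ℓ u).Nonempty := Finset.card_pos.1 (by rw [hP.1 u]; omega)
    obtain ⟨a, ha⟩ := this
    exact absurd (hP.2.2.2 u v₀ hune hanc a ha 0 h0) (Fin.not_lt_zero a)

lemma wt_update_of_mem {c : V → ℕ} {v₀ u : V} (hc : c v₀ ≠ 0) (hm : v₀ ∈ sub parent u) :
    wt parent (Function.update c v₀ (c v₀ - 1)) u = wt parent c u - 1 := by
  unfold wt
  rw [Finset.sum_update_of_mem hm, ← Finset.add_sum_erase _ c hm, Finset.erase_eq]
  omega

lemma wt_update_of_not_mem {c : V → ℕ} {v₀ u : V} (hm : v₀ ∉ sub parent u) :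
    wt parent (Function.update c v₀ (c v₀ - 1)) u = wt parent c u := by
  unfold wt
  apply Finset.sum_congr rfl
  intro x hx
  rw [Function.update_of_ne (fun hh => hm (by rwa [hh] at hx))]

lemma prod_desc_update {c : V → ℕ} {v₀ : V} (hv₀ : v₀ ∈ elig parent c) :
    ∏ u, (wt parent c u).descFactorial (c u)
      = wt parent c v₀ *
        ∏ u, (wt parent (Function.update c v₀ (c v₀ - 1)) u).descFactorial
          (Function.update c v₀ (c v₀ - 1) u) := by
  classical
  obtain ⟨hc0, hanc0⟩ := (mem_elig parent).1 hv₀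
  set c' := Function.update c v₀ (c v₀ - 1) with hc'
  rw [← Finset.mul_prod_erase Finset.univ _ (Finset.mem_univ v₀),
      ← Finset.mul_prod_erase Finset.univ
        (fun u => (wt parent c' u).descFactorial (c' u)) (Finset.mem_univ v₀), ← mul_assoc]
  have hrest : ∏ u ∈ Finset.univ.erase v₀, (wt parent c u).descFactorial (c u)
      = ∏ u ∈ Finset.univ.erase v₀, (wt parent c' u).descFactorial (c' u) := by
    apply Finset.prod_congr rfl
    intro u hu
    have hune : u ≠ v₀ := (Finset.mem_erase.1 hu).1
    by_cases hm : v₀ ∈ sub parent u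
    · have hcu : c u = 0 := hanc0 u hune ((mem_sub parent).1 hm)
      rw [hc', Function.update_of_ne hune, hcu]
      simp
    · rw [hc', Function.update_of_ne hune, wt_update_of_not_mem parent hm]
  rw [hrest]
  congr 1
  have h1 : 1 ≤ c v₀ := Nat.one_le_iff_ne_zero.2 hc0
  have h2 : 1 ≤ wt parent c v₀ := le_trans h1 (le_wt parent c v₀)
  have hwt' : wt parent c' v₀ = wt parent c v₀ - 1 := by
    rw [hc', wt_update_of_mem parent hc0 (self_mem_sub parent v₀)]
  have hcv' : c' v₀ = c v₀ - 1 := by rw [hc', Function.update_self]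
  rw [hwt', hcv']
  obtain ⟨m, hm⟩ : ∃ m, wt parent c v₀ = m + 1 := ⟨wt parent c v₀ - 1, by omega⟩
  obtain ⟨l, hl⟩ : ∃ l, c v₀ = l + 1 := ⟨c v₀ - 1, by omega⟩
  rw [hm, hl, Nat.succ_descFactorial_succ]
  simp

/-- The main counting lemma, proved by induction on the total number of labels. -/
lemma main_count {r : V} (hroot : parent r = r)
    (hreach : ∀ v : V, ∃ j : ℕ, parent^[j] v = r) :
    ∀ (N : ℕ) (c : V → ℕ), ∑ v, c v = N →
      Nat.card {ℓ : V → Finset (Fin N) // IsLab parent c ℓ} *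
        ∏ v, (wt parent c v).descFactorial (c v) = N.factorial := by
  intro N
  induction N with
  | zero =>
    intro c hc
    have hc0 : ∀ v, c v = 0 := by
      intro v
      exact Nat.eq_zero_of_le_zero (hc ▸ Finset.single_le_sum
        (fun (u : V) _ => Nat.zero_le (c u)) (Finset.mem_univ v))
    have hall : ∀ ℓ : V → Finset (Fin 0), IsLab parent c ℓ := by
      intro ℓ
      refine ⟨fun v => ?_, fun v w _ => ?_, fun x => x.elim0, fun v w _ _ a ha => ?_⟩
      · rw [Finset.eq_empty_of_isEmpty (ℓ v), hc0]; rfl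
      · rw [Finset.eq_empty_of_isEmpty (ℓ v)]; exact Finset.disjoint_empty_left _
      · exact a.elim0
    haveI : Unique {ℓ : V → Finset (Fin 0) // IsLab parent c ℓ} :=
      ⟨⟨⟨fun _ => ∅, hall _⟩⟩, fun ℓ => Subtype.ext (funext fun v =>
        (Finset.eq_empty_of_isEmpty _))⟩
    rw [Nat.card_unique]
    have hwt0 : ∀ v, wt parent c v = 0 := fun v => Finset.sum_eq_zero fun u _ => hc0 u
    simp [hwt0, hc0]
  | succ N ih =>
    intro c hc
    rw [card_split parent c, Finset.sum_mul]
    have hterm : ∀ v₀ ∈ elig parent c,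
        Nat.card {ℓ : V → Finset (Fin (N + 1)) //
            IsLab parent c ℓ ∧ (0 : Fin (N + 1)) ∈ ℓ v₀} *
          ∏ v, (wt parent c v).descFactorial (c v)
        = wt parent c v₀ * N.factorial := by
      intro v₀ hv₀
      rw [card_fiber parent hv₀, prod_desc_update parent hv₀]
      have hcv₀ : c v₀ ≠ 0 := ((mem_elig parent).1 hv₀).1
      have hsum' : ∑ v, Function.update c v₀ (c v₀ - 1) v = N := by
        rw [Finset.sum_update_of_mem (Finset.mem_univ v₀),
          ← Finset.erase_eq]
        have := Finset.add_sum_erase Finset.univ c (Finset.mem_univ v₀)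
        omega
      rw [mul_left_comm]
      rw [ih _ hsum']
    rw [Finset.sum_congr rfl hterm, ← Finset.sum_mul, sum_wt_elig parent hroot hreach c, hc,
      Nat.factorial_succ]

end Tree

/-- The number of increasing `k`-labellings of a rooted tree `T` of size `n`
(with distinguishable nodes) equals `(kn)!` divided by the product over all
vertices `v` of the falling factorial `(k h_v)(k h_v - 1) ⋯ (k h_v - k + 1)`,
where `h_v` is the hook-length of `v`.

The rooted tree is modelled by a finite vertex type `V` with a parent function. -/
theorem increasing_k_labellings_count
    (k : ℕ) (hk : 1 ≤ k)
    (V : Type) [Fintype V] (r : V) (parent : V → V)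
    (hroot : parent r = r)
    (hreach : ∀ v : V, ∃ j : ℕ, parent^[j] v = r)
    (n : ℕ) (hn : n = Fintype.card V)
    (h : V → ℕ) (hh : ∀ v : V, h v = Set.ncard {u : V | ∃ j : ℕ, parent^[j] u = v}) :
    (Nat.card {ℓ : V → Finset (Fin (k * n)) //
        (∀ v : V, (ℓ v).card = k) ∧
        (∀ v w : V, v ≠ w → Disjoint (ℓ v) (ℓ w)) ∧
        (∀ x : Fin (k * n), ∃ v : V, x ∈ ℓ v) ∧
        (∀ w : V, w ≠ r → ∀ a ∈ ℓ (parent w), ∀ b ∈ ℓ w, a < b)} : ℚ)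
      = (Nat.factorial (k * n) : ℚ)
          / ∏ v : V, (Nat.descFactorial (k * h v) k : ℚ) := by
  classical
  -- identify the hook lengths with subtree weights
  have hhv : ∀ v, wt parent (fun _ => k) v = k * h v := by
    intro v
    have hset : {u : V | ∃ j : ℕ, parent^[j] u = v} = ↑(sub parent v) := by
      ext u; simp [_root_.mem_sub]
    rw [wt, Finset.sum_const, smul_eq_mul, hh, hset, Set.ncard_coe_finset, mul_comm]
  -- the two labelling conditions agree
  have hiff : ∀ ℓ : V → Finset (Fin (k * n)),
      ((∀ v : V, (ℓ v).card = k) ∧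
        (∀ v w : V, v ≠ w → Disjoint (ℓ v) (ℓ w)) ∧
        (∀ x : Fin (k * n), ∃ v : V, x ∈ ℓ v) ∧
        (∀ w : V, w ≠ r → ∀ a ∈ ℓ (parent w), ∀ b ∈ ℓ w, a < b))
      ↔ IsLab parent (fun _ => k) ℓ := by
    intro ℓ
    constructor
    · rintro ⟨h1, h2, h3, h4⟩
      refine ⟨h1, h2, h3, ?_⟩
      have key : ∀ (j : ℕ) (w v : V), parent^[j] w = v → v ≠ w →
          ∀ a ∈ ℓ v, ∀ b ∈ ℓ w, a < b := by
        intro j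
        induction j with
        | zero => intro w v hj hne; exact absurd hj.symm hne
        | succ j ihj =>
          intro w v hj hne a ha b hb
          by_cases hwr : w = r
          · exfalso
            apply hne
            subst hwr
            rw [← hj, Function.iterate_succ_apply, hroot, Function.iterate_fixed hroot]
          · have hpar := h4 w hwr
            rw [Function.iterate_succ_apply] at hj
            by_cases hvp : v = parent w
            · exact hpar a (hvp ▸ ha) b hb
            · obtain ⟨b', hb'⟩ : (ℓ (parent w)).Nonempty := by
                rw [← Finset.card_pos, h1]; omega
              exact lt_trans (ihj (parent w) v hj hvp a ha b' hb') (hpar b' hb' b hb)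
      rintro v w hne ⟨j, hj⟩ a ha b hb
      exact key j w v hj hne a ha b hb
    · rintro ⟨h1, h2, h3, h4⟩
      refine ⟨h1, h2, h3, fun w hwr a ha b hb => ?_⟩
      have hpw : parent w ≠ w := by
        intro hfix
        apply hwr
        obtain ⟨j, hj⟩ := hreach w
        rwa [Function.iterate_fixed hfix] at hj
      exact h4 (parent w) w hpw ⟨1, Function.iterate_one parent ▸ rfl⟩ a ha b hb
  have hcards : Nat.card {ℓ : V → Finset (Fin (k * n)) //
        (∀ v : V, (ℓ v).card = k) ∧
        (∀ v w : V, v ≠ w → Disjoint (ℓ v) (ℓ w)) ∧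
        (∀ x : Fin (k * n), ∃ v : V, x ∈ ℓ v) ∧
        (∀ w : V, w ≠ r → ∀ a ∈ ℓ (parent w), ∀ b ∈ ℓ w, a < b)}
      = Nat.card {ℓ : V → Finset (Fin (k * n)) // IsLab parent (fun _ => k) ℓ} :=
    Nat.card_congr (Equiv.subtypeEquivRight hiff)
  have hsum : ∑ _v : V, k = k * n := by
    rw [Finset.sum_const, Finset.card_univ, smul_eq_mul, hn, mul_comm]
  have hmain := main_count parent hroot hreach (k * n) (fun _ => k) hsum
  simp only [hhv] at hmain
  have hne0 : ∏ v : V, (Nat.descFactorial (k * h v) k : ℚ) ≠ 0 := by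
    apply Finset.prod_ne_zero_iff.2
    intro v _
    have hle : k ≤ k * h v := by
      rw [← hhv v]; exact le_wt parent (fun _ => k) v
    have hne : Nat.descFactorial (k * h v) k ≠ 0 := fun h0 =>
      absurd (Nat.descFactorial_eq_zero_iff_lt.1 h0) (Nat.not_lt.2 hle)
    exact_mod_cast hne
  rw [hcards, eq_div_iff hne0]
  push_cast
  exact_mod_cast hmain
end

section
/- Define T_n for n ≥ 1 by T_1 = 1 and T_n = Σ_{k=1}^{n-1} C(2n-2, 2k) T_k T_{n-k} for n ≥ 2. Then T_n = (2n-2)!/2^{n-1} · c_{n-1}, where c_0 = 1 and c_k = Σ_{m=0}^{k-1} c_m c_{k-1-m}/((m+1)(2m+1)) for k > 0. -/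
/-!
Normalising by the weights `F n = (2n)!/2^n`, the binomial recursion for `T` becomes the
recursion for `c`: the identity `C(2m+2, 2j+2) · F j · F (m-j) = F (m+1) / ((j+1)(2j+1))`
turns each term of one into the corresponding term of the other, so `T (n+1) = F n · c n`
follows by strong induction.
-/

open Finset Nat

noncomputable def factorialTwoMulDivPow (n : ℕ) : ℝ := (2 * n)! / 2 ^ n

local notation "F" => factorialTwoMulDivPow

lemma choose_mul_factorialTwoMulDivPow_mul (i j : ℕ) :
    ((2 * (i + j) + 2).choose (2 * i + 2) : ℝ) * F i * F j
      = F (i + j + 1) / ((i + 1) * (2 * i + 1)) := by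
  have hchoose := Nat.add_choose_mul_factorial_mul_factorial (2 * j) (2 * i + 2)
  have hfact : (2 * i + 2)! = (2 * i + 2) * ((2 * i + 1) * (2 * i)!) := by
    rw [factorial_succ, factorial_succ]
  rw [show 2 * j + (2 * i + 2) = 2 * (i + j) + 2 by ring, hfact] at hchoose
  unfold factorialTwoMulDivPow
  rw [show 2 * (i + j + 1) = 2 * (i + j) + 2 by ring, ← hchoose]
  push_cast
  field_simp
  ring

lemma sum_choose_mul_factorialTwoMulDivPow (c : ℕ → ℝ) (m : ℕ) :
    ∑ j ∈ range (m + 1),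
        ((2 * m + 2).choose (2 * j + 2) : ℝ) * (F j * c j) * (F (m - j) * c (m - j)) =
      F (m + 1) * ∑ j ∈ range (m + 1), c j * c (m - j) / ((j + 1) * (2 * j + 1)) := by
  rw [mul_sum]
  refine sum_congr rfl fun j hj => ?_
  obtain ⟨k, rfl⟩ := Nat.exists_eq_add_of_le (Nat.le_of_lt_succ (mem_range.mp hj))
  rw [Nat.add_sub_cancel_left, mul_div_assoc', mul_div_right_comm,
    ← choose_mul_factorialTwoMulDivPow_mul]
  ring

/-- With `T₁ = 1` and `Tₙ = ∑_{k=1}^{n-1} C(2n-2, 2k) T_k T_{n-k}` for `n ≥ 2`,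
one has `Tₙ = (2n-2)!/2^{n-1} · c_{n-1}`, where `c₀ = 1` and
`c_k = ∑_{m=0}^{k-1} c_m c_{k-1-m} / ((m+1)(2m+1))` are the Taylor coefficients
of the inverse error function. -/
theorem ordered_bilabelled_count_inverse_erf
    (T c : ℕ → ℝ)
    (hT1 : T 1 = 1)
    (hT : ∀ n, 2 ≤ n →
      T n = ∑ k ∈ Finset.Ico 1 n, (Nat.choose (2 * n - 2) (2 * k) : ℝ) * T k * T (n - k))
    (hc0 : c 0 = 1)
    (hc : ∀ k, 1 ≤ k →
      c k = ∑ m ∈ Finset.range k, c m * c (k - 1 - m) / (((m : ℝ) + 1) * (2 * (m : ℝ) + 1))) :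
    ∀ n, 1 ≤ n →
      T n = (Nat.factorial (2 * n - 2) : ℝ) / 2 ^ (n - 1) * c (n - 1) := by
  suffices h : ∀ n, T (n + 1) = F n * c n by
    intro n hn
    obtain ⟨n, rfl⟩ := Nat.exists_eq_add_of_le' hn
    simpa [factorialTwoMulDivPow, Nat.mul_add] using h n
  intro n
  induction n using Nat.strong_induction_on with
  | _ n ih =>
  match n with
  | 0 => simp [factorialTwoMulDivPow, hT1, hc0]
  | m + 1 =>
    calc T (m + 2)
        = ∑ j ∈ range (m + 1),
            ((2 * m + 2).choose (2 * j + 2) : ℝ) * T (j + 1) * T (m - j + 1) := by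
          rw [hT _ (by omega), sum_Ico_eq_sum_range]
          refine sum_congr rfl fun j hj => ?_
          have hjm := mem_range.mp hj
          rw [show 2 * (m + 2) - 2 = 2 * m + 2 by omega, show m + 2 - (1 + j) = m - j + 1 by omega,
            add_comm 1 j, Nat.mul_succ]
      _ = ∑ j ∈ range (m + 1),
            ((2 * m + 2).choose (2 * j + 2) : ℝ) * (F j * c j) * (F (m - j) * c (m - j)) := by
          refine sum_congr rfl fun j hj => ?_
          have hjm := mem_range.mp hj
          rw [ih j (by omega), ih (m - j) (by omega)]
      _ = F (m + 1) * c (m + 1) := by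
          rw [sum_choose_mul_factorialTwoMulDivPow, hc (m + 1) le_add_self]
          simp only [Nat.add_sub_cancel]
end

section
/- Let T(z) be a formal power series with T(0)=0 satisfying T'(z) = φ(T(z)) + T(z) for a formal power series φ, and let T̃(z) be a formal power series with T̃(0)=0 satisfying T̃'(z) = φ(T̃(z)) + T̃(z). Then T(z) = T̃(z); in particular, the number T_m of free multilabelled increasing trees with m labels and degree-weight series φ equals the number of (unilabelled) increasing trees of size m with degree-weight series φ̃(t) = φ(t) + t. -/
/-! Reading `Y' = φ(Y) + Y` at coefficient `n` gives `(n + 1) Y_{n+1}` as a quantity that depends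
only on `Y_0, …, Y_n`, because the `n`-th coefficient of `φ(Y)` only involves `Y` modulo `X^{n+1}`.
So `Y(0) = 0` and the equation determine every coefficient of `Y` recursively. -/

/-- Composition `φ(T)` of formal power series, valid when `T` has zero
constant coefficient. -/
noncomputable def psComp (φ T : PowerSeries ℝ) : PowerSeries ℝ :=
  PowerSeries.mk fun n =>
    ∑ j ∈ Finset.range (n + 1), (PowerSeries.coeff j φ) * PowerSeries.coeff n (T ^ j)

open PowerSeries

section Trunc

variable {R : Type*} [CommSemiring R] {f g : R⟦X⟧} {n : ℕ}

theorem PowerSeries.coeff_eq_of_trunc_eq {m : ℕ} (hm : m < n) (h : trunc n f = trunc n g) :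
    coeff m f = coeff m g := by
  simpa [coeff_trunc, hm] using congr_arg (Polynomial.coeff · m) h

theorem PowerSeries.trunc_pow_eq_of_trunc_eq (h : trunc n f = trunc n g) (j : ℕ) :
    trunc n (f ^ j) = trunc n (g ^ j) := by
  rw [← trunc_trunc_pow, h, trunc_trunc_pow]

end Trunc

theorem coeff_psComp_eq_of_trunc_eq (φ : ℝ⟦X⟧) {T T' : ℝ⟦X⟧} {n : ℕ}
    (h : trunc (n + 1) T = trunc (n + 1) T') :
    coeff n (psComp φ T) = coeff n (psComp φ T') := by
  simp only [psComp, coeff_mk,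
    fun j => coeff_eq_of_trunc_eq n.lt_succ_self (trunc_pow_eq_of_trunc_eq h j)]

theorem coeff_succ_eq_of_derivative_eq_psComp_add {φ T T' : ℝ⟦X⟧}
    (hT : d⁄dX ℝ T = psComp φ T + T) (hT' : d⁄dX ℝ T' = psComp φ T' + T') {n : ℕ}
    (h : trunc (n + 1) T = trunc (n + 1) T') :
    coeff (n + 1) T = coeff (n + 1) T' := by
  have hd : coeff n (d⁄dX ℝ T) = coeff n (d⁄dX ℝ T') := by
    rw [hT, hT', map_add, map_add, coeff_psComp_eq_of_trunc_eq φ h,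
      coeff_eq_of_trunc_eq n.lt_succ_self h]
  rw [coeff_derivative, coeff_derivative] at hd
  exact mul_right_cancel₀ (by positivity) hd

/-- Uniqueness for the ODE of free multilabelled increasing trees: if `T` and
`T̃` are formal power series with zero constant coefficient both satisfying
`Y' = φ(Y) + Y`, then `T = T̃`.  (In particular, the EGF of free multilabelled
increasing trees with degree-weight series `φ` coincides with the EGF of
unilabelled increasing trees with degree-weight series `φ̃(t) = φ(t) + t`,
since the latter satisfies `T̃' = φ̃(T̃) = φ(T̃) + T̃`.) -/
theorem free_multilabelled_eq_unilabelled
    (φ T T' : PowerSeries ℝ)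
    (hT0 : PowerSeries.constantCoeff T = 0)
    (hT : PowerSeries.derivative ℝ T = psComp φ T + T)
    (hT'0 : PowerSeries.constantCoeff T' = 0)
    (hT' : PowerSeries.derivative ℝ T' = psComp φ T' + T') :
    T = T' := by
  have htrunc : ∀ n, trunc (n + 1) T = trunc (n + 1) T' := by
    intro n
    induction n with
    | zero => rw [trunc_succ, trunc_succ, trunc_zero', trunc_zero',
        coeff_zero_eq_constantCoeff_apply, coeff_zero_eq_constantCoeff_apply, hT0, hT'0]
    | succ n ih => rw [trunc_succ T, trunc_succ T', ih,
        coeff_succ_eq_of_derivative_eq_psComp_add hT hT' ih]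
  ext n
  exact coeff_eq_of_trunc_eq n.lt_succ_self (htrunc n)
end

section
/- There is a bijection between the set of ordered free multilabelled increasing trees with label set {1,...,m} and the set of ordered increasing trees with m vertices labelled {1,...,m} in which every vertex of out-degree 1 is coloured either black or white. -/
/-- An ordered free multilabelled increasing tree with label set `{0,…,m-1}`
(`Fin m`), encoded canonically: `block l` is the minimum label of the block
(node) containing `l`; the nodes are the fixed points of `block`; `parent`
gives the parent node of each non-root node (the root is the node `0`);
`rank` gives the left-to-right position of each non-root node among the
children of its parent. -/
def OrderedFreeMultilabelledIncreasingTree (m : ℕ) [NeZero m] : Type :=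
  { t : (Fin m → Fin m) × (Fin m → Fin m) × (Fin m → ℕ) //
    (∀ l, t.1 (t.1 l) = t.1 l) ∧
    (∀ l, t.1 l ≤ l) ∧
    t.2.1 0 = 0 ∧ t.2.2 0 = 0 ∧
    (∀ l, t.1 l ≠ l → t.2.1 l = l ∧ t.2.2 l = 0) ∧
    (∀ v, t.1 v = v → v ≠ 0 →
      t.1 (t.2.1 v) = t.2.1 v ∧
      (∀ l, t.1 l = t.2.1 v → l < v)) ∧
    (∀ v, t.1 v = v → v ≠ 0 →
      t.2.2 v <
        Set.ncard {w : Fin m | t.1 w = w ∧ w ≠ 0 ∧ t.2.1 w = t.2.1 v}) ∧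
    (∀ v w, t.1 v = v → t.1 w = w → v ≠ 0 → w ≠ 0 →
      t.2.1 v = t.2.1 w → t.2.2 v = t.2.2 w → v = w) }

/-- An ordered increasing tree with `m` vertices labelled `0,…,m-1`
(root `0`, labels increase towards the leaves, so `parent v < v`), together
with a left-to-right rank of each non-root vertex among its siblings, and a
colouring of the vertices by `Bool` which is forced to be `false` (white)
except possibly at vertices of out-degree `1`. -/
def OrderedIncreasingTreeBicolored (m : ℕ) [NeZero m] : Type :=
  { t : (Fin m → Fin m) × (Fin m → ℕ) × (Fin m → Bool) //
    t.1 0 = 0 ∧ t.2.1 0 = 0 ∧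
    (∀ v, v ≠ 0 → t.1 v < v) ∧
    (∀ v, v ≠ 0 →
      t.2.1 v < Set.ncard {w : Fin m | w ≠ 0 ∧ t.1 w = t.1 v}) ∧
    (∀ v w, v ≠ 0 → w ≠ 0 → t.1 v = t.1 w → t.2.1 v = t.2.1 w → v = w) ∧
    (∀ v, Set.ncard {w : Fin m | w ≠ 0 ∧ t.1 w = v} ≠ 1 → t.2.2 v = false) }


/-!
Each node `{a₁ < ⋯ < aₖ}` of a free multilabelled tree is expanded into the chain
`a₁ → a₂ → ⋯ → aₖ`, with the children of the node hung below `aₖ` in the same order, and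
`a₁, …, aₖ₋₁` are coloured black; they have out-degree one. Conversely, in a bicoloured tree every
black vertex has exactly one child, and contracting the edge below each black vertex merges the
chains back into nodes. What makes the contraction invertible is that the vertices merged into one
node form a chain of ancestors whose only white vertex is the largest one: a black vertex has a
unique child, so two vertices of one node cannot lie on different branches.
-/

open Finset

namespace OrderedFreeMultilabelledIncreasingTree

variable {m : ℕ} [NeZero m] (t : OrderedFreeMultilabelledIncreasingTree m)
  {l n u v w x : Fin m}

def block : Fin m → Fin m := t.1.1

def parent : Fin m → Fin m := t.1.2.1

def rank : Fin m → ℕ := t.1.2.2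

theorem ext {t t' : OrderedFreeMultilabelledIncreasingTree m} (hb : t.block = t'.block)
    (hp : t.parent = t'.parent) (hr : t.rank = t'.rank) : t = t' :=
  Subtype.ext (Prod.ext hb (Prod.ext hp hr))

theorem block_block (l : Fin m) : t.block (t.block l) = t.block l := t.2.1 l

theorem block_le (l : Fin m) : t.block l ≤ l := t.2.2.1 l

theorem parent_zero : t.parent 0 = 0 := t.2.2.2.1

theorem rank_zero : t.rank 0 = 0 := t.2.2.2.2.1

theorem parent_of_block_ne (h : t.block l ≠ l) : t.parent l = l := (t.2.2.2.2.2.1 l h).1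

theorem rank_of_block_ne (h : t.block l ≠ l) : t.rank l = 0 := (t.2.2.2.2.2.1 l h).2

theorem block_parent (hv : t.block v = v) (h0 : v ≠ 0) :
    t.block (t.parent v) = t.parent v :=
  (t.2.2.2.2.2.2.1 v hv h0).1

theorem lt_of_block_eq_parent (hv : t.block v = v) (h0 : v ≠ 0) (hl : t.block l = t.parent v) :
    l < v :=
  (t.2.2.2.2.2.2.1 v hv h0).2 l hl

theorem rank_lt (hv : t.block v = v) (h0 : v ≠ 0) :
    t.rank v < {w : Fin m | t.block w = w ∧ w ≠ 0 ∧ t.parent w = t.parent v}.ncard :=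
  t.2.2.2.2.2.2.2.1 v hv h0

theorem eq_of_parent_eq_of_rank_eq (hv : t.block v = v) (hw : t.block w = w) (hv0 : v ≠ 0)
    (hw0 : w ≠ 0) (hp : t.parent v = t.parent w) (hr : t.rank v = t.rank w) : v = w :=
  t.2.2.2.2.2.2.2.2 v w hv hw hv0 hw0 hp hr

theorem block_zero : t.block 0 = 0 := le_antisymm (t.block_le 0) (Fin.zero_le _)

theorem ne_zero_of_block_ne (h : t.block l ≠ l) : l ≠ 0 := by
  rintro rfl
  exact h t.block_zero

noncomputable def maxLabel (n : Fin m) : Fin m := {u | t.block u = n}.toFinset.sup id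

noncomputable def predLabel (l : Fin m) : Fin m :=
  {u | t.block u = t.block l ∧ u < l}.toFinset.sup id

theorem block_maxLabel (hn : t.block n = n) : t.block (t.maxLabel n) = n := by
  obtain ⟨u, hu, hmax⟩ := exists_mem_eq_sup {u | t.block u = n}.toFinset ⟨n, by simpa⟩ id
  rw [maxLabel, hmax]
  simpa using hu

theorem le_maxLabel (hu : t.block u = n) : u ≤ t.maxLabel n :=
  le_sup (f := id) (by simpa using hu)

theorem predLabel_spec (h : t.block l ≠ l) :
    t.block (t.predLabel l) = t.block l ∧ t.predLabel l < l := by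
  have hne : {u | t.block u = t.block l ∧ u < l}.toFinset.Nonempty :=
    ⟨t.block l, by simpa using ⟨t.block_block l, lt_of_le_of_ne (t.block_le l) h⟩⟩
  obtain ⟨u, hu, hmax⟩ := exists_mem_eq_sup _ hne id
  rw [predLabel, hmax]
  simpa using hu

theorem le_predLabel (hu : t.block u = t.block l) (hul : u < l) : u ≤ t.predLabel l :=
  le_sup (f := id) (by simpa using ⟨hu, hul⟩)

noncomputable def expandParent (l : Fin m) : Fin m :=
  if l = 0 then 0 else if t.block l = l then t.maxLabel (t.parent l) else t.predLabel l

def expandColour (l : Fin m) : Bool := decide (∃ u, t.block u = t.block l ∧ l < u)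

theorem expandParent_zero : t.expandParent 0 = 0 := if_pos rfl

theorem expandParent_of_block_eq (hv : t.block v = v) (h0 : v ≠ 0) :
    t.expandParent v = t.maxLabel (t.parent v) := by
  rw [expandParent, if_neg h0, if_pos hv]

theorem expandParent_of_block_ne (h : t.block l ≠ l) : t.expandParent l = t.predLabel l := by
  rw [expandParent, if_neg (t.ne_zero_of_block_ne h), if_neg h]

theorem block_expandParent_of_block_eq (hv : t.block v = v) (h0 : v ≠ 0) :
    t.block (t.expandParent v) = t.parent v := by
  rw [t.expandParent_of_block_eq hv h0, t.block_maxLabel (t.block_parent hv h0)]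

theorem le_expandParent_of_block_eq (hv : t.block v = v) (h0 : v ≠ 0)
    (hu : t.block u = t.block (t.expandParent v)) : u ≤ t.expandParent v := by
  rw [t.block_expandParent_of_block_eq hv h0] at hu
  rw [t.expandParent_of_block_eq hv h0]
  exact t.le_maxLabel hu

theorem block_expandParent_of_block_ne (h : t.block l ≠ l) :
    t.block (t.expandParent l) = t.block l := by
  rw [t.expandParent_of_block_ne h]
  exact (t.predLabel_spec h).1

theorem le_expandParent_of_block_ne (h : t.block l ≠ l) (hu : t.block u = t.block l)
    (hul : u < l) : u ≤ t.expandParent l := by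
  rw [t.expandParent_of_block_ne h]
  exact t.le_predLabel hu hul

theorem expandParent_lt (h0 : v ≠ 0) : t.expandParent v < v := by
  by_cases hv : t.block v = v
  · exact t.lt_of_block_eq_parent hv h0 (t.block_expandParent_of_block_eq hv h0)
  · rw [t.expandParent_of_block_ne hv]
    exact (t.predLabel_spec hv).2

theorem expandColour_expandParent_of_block_eq (hv : t.block v = v) (h0 : v ≠ 0) :
    t.expandColour (t.expandParent v) = false := by
  simpa [expandColour] using fun u hu => t.le_expandParent_of_block_eq hv h0 hu

theorem expandColour_expandParent_of_block_ne (h : t.block l ≠ l) :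
    t.expandColour (t.expandParent l) = true := by
  simpa [expandColour, t.block_expandParent_of_block_ne h] using
    ⟨l, rfl, t.expandParent_lt (t.ne_zero_of_block_ne h)⟩

theorem expandParent_ne_of_block_eq_of_block_ne (hv : t.block v = v) (h0 : v ≠ 0)
    (hw : t.block w ≠ w) : t.expandParent v ≠ t.expandParent w := by
  intro h
  have hwv : w ≤ t.expandParent v :=
    t.le_expandParent_of_block_eq hv h0 (by rw [h, t.block_expandParent_of_block_ne hw])
  exact (t.expandParent_lt (t.ne_zero_of_block_ne hw)).not_ge (h ▸ hwv)

theorem eq_of_expandParent_eq_of_block_ne (hv : t.block v ≠ v) (hw : t.block w ≠ w)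
    (h : t.expandParent v = t.expandParent w) : v = w := by
  have hvw : t.block v = t.block w := by
    rw [← t.block_expandParent_of_block_ne hv, h, t.block_expandParent_of_block_ne hw]
  by_contra hne
  rcases lt_or_gt_of_ne hne with hlt | hlt
  · have := t.le_expandParent_of_block_ne hw hvw hlt
    exact (t.expandParent_lt (t.ne_zero_of_block_ne hv)).not_ge (h ▸ this)
  · have := t.le_expandParent_of_block_ne hv hvw.symm hlt
    exact (t.expandParent_lt (t.ne_zero_of_block_ne hw)).not_ge (h ▸ this)

theorem expandParent_eq_iff (hv : t.block v = v) (h0 : v ≠ 0) (hw0 : w ≠ 0) :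
    t.expandParent w = t.expandParent v ↔ t.block w = w ∧ t.parent w = t.parent v := by
  by_cases hw : t.block w = w
  · refine ⟨fun h => ⟨hw, ?_⟩, fun ⟨_, h⟩ => ?_⟩
    · rw [← t.block_expandParent_of_block_eq hw hw0, h, t.block_expandParent_of_block_eq hv h0]
    · rw [t.expandParent_of_block_eq hw hw0, t.expandParent_of_block_eq hv h0, h]
  · simpa [hw] using (t.expandParent_ne_of_block_eq_of_block_ne hv h0 hw).symm

theorem ncard_expandParent_eq_of_expandColour (hx : t.expandColour x = true) :
    {w : Fin m | w ≠ 0 ∧ t.expandParent w = x}.ncard = 1 := by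
  obtain ⟨u, hu⟩ : ∃ u, t.block u = t.block x ∧ x < u := by simpa [expandColour] using hx
  obtain ⟨a, ⟨hax, hxa⟩, hmin⟩ :=
    Set.exists_min_image {u | t.block u = t.block x ∧ x < u} id (Set.toFinite _) ⟨u, hu⟩
  have ha : t.block a ≠ a := (lt_of_le_of_lt (hax ▸ t.block_le x) hxa).ne
  have hpa : t.expandParent a = x := by
    refine le_antisymm (not_lt.1 fun hlt => ?_) (t.le_expandParent_of_block_ne ha hax.symm hxa)
    have := hmin _ ⟨(t.block_expandParent_of_block_ne ha).trans hax, hlt⟩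
    exact (t.expandParent_lt (t.ne_zero_of_block_ne ha)).not_ge this
  refine Set.ncard_eq_one.2 ⟨a, Set.ext fun w => ⟨fun ⟨hw0, hwx⟩ => ?_, ?_⟩⟩
  · by_cases hw : t.block w = w
    · rw [← hwx, t.expandColour_expandParent_of_block_eq hw hw0] at hx
      exact absurd hx Bool.false_ne_true
    · exact t.eq_of_expandParent_eq_of_block_ne hw ha (hwx.trans hpa.symm)
  · rintro rfl
    exact ⟨t.ne_zero_of_block_ne ha, hpa⟩

theorem rank_lt_ncard_expandParent (h0 : v ≠ 0) :
    t.rank v < {w : Fin m | w ≠ 0 ∧ t.expandParent w = t.expandParent v}.ncard := by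
  by_cases hv : t.block v = v
  · have hchildren : {w : Fin m | w ≠ 0 ∧ t.expandParent w = t.expandParent v} =
        {w | t.block w = w ∧ w ≠ 0 ∧ t.parent w = t.parent v} := by
      ext w
      by_cases hw0 : w = 0
      · simp [hw0]
      · simp [hw0, t.expandParent_eq_iff hv h0 hw0]
    exact hchildren ▸ t.rank_lt hv h0
  · rw [t.rank_of_block_ne hv]
    exact (Set.ncard_pos (Set.toFinite _)).2 ⟨v, h0, rfl⟩

theorem eq_of_expandParent_eq_of_rank_eq (hv0 : v ≠ 0) (hw0 : w ≠ 0)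
    (hp : t.expandParent v = t.expandParent w) (hr : t.rank v = t.rank w) : v = w := by
  by_cases hw : t.block w = w
  · obtain ⟨hv, hpv⟩ := (t.expandParent_eq_iff hw hw0 hv0).1 hp
    exact t.eq_of_parent_eq_of_rank_eq hv hw hv0 hw0 hpv hr
  · by_cases hv : t.block v = v
    · exact absurd hp (t.expandParent_ne_of_block_eq_of_block_ne hv hv0 hw)
    · exact t.eq_of_expandParent_eq_of_block_ne hv hw hp

theorem expandColour_eq_false (hx : {w : Fin m | w ≠ 0 ∧ t.expandParent w = x}.ncard ≠ 1) :
    t.expandColour x = false :=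
  Bool.eq_false_iff.2 (mt t.ncard_expandParent_eq_of_expandColour hx)

noncomputable def expand : OrderedIncreasingTreeBicolored m :=
  ⟨(t.expandParent, t.rank, t.expandColour), t.expandParent_zero, t.rank_zero,
    fun _ => t.expandParent_lt, fun _ => t.rank_lt_ncard_expandParent,
    fun _ _ => t.eq_of_expandParent_eq_of_rank_eq, fun _ => t.expandColour_eq_false⟩

end OrderedFreeMultilabelledIncreasingTree

namespace OrderedIncreasingTreeBicolored

variable {m : ℕ} [NeZero m] (s : OrderedIncreasingTreeBicolored m) {a b l u v w x y : Fin m}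

def parent : Fin m → Fin m := s.1.1

def rank : Fin m → ℕ := s.1.2.1

def colour : Fin m → Bool := s.1.2.2

theorem ext {s s' : OrderedIncreasingTreeBicolored m} (hp : s.parent = s'.parent)
    (hr : s.rank = s'.rank) (hc : s.colour = s'.colour) : s = s' :=
  Subtype.ext (Prod.ext hp (Prod.ext hr hc))

theorem parent_zero : s.parent 0 = 0 := s.2.1

theorem rank_zero : s.rank 0 = 0 := s.2.2.1

theorem parent_lt (h0 : v ≠ 0) : s.parent v < v := s.2.2.2.1 v h0

theorem rank_lt (h0 : v ≠ 0) :
    s.rank v < {w : Fin m | w ≠ 0 ∧ s.parent w = s.parent v}.ncard :=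
  s.2.2.2.2.1 v h0

theorem eq_of_parent_eq_of_rank_eq (hv0 : v ≠ 0) (hw0 : w ≠ 0) (hp : s.parent v = s.parent w)
    (hr : s.rank v = s.rank w) : v = w :=
  s.2.2.2.2.2.1 v w hv0 hw0 hp hr

theorem colour_eq_false (hx : {w : Fin m | w ≠ 0 ∧ s.parent w = x}.ncard ≠ 1) :
    s.colour x = false :=
  s.2.2.2.2.2.2 x hx

theorem ncard_children_of_colour (hx : s.colour x = true) :
    {w : Fin m | w ≠ 0 ∧ s.parent w = x}.ncard = 1 := by
  by_contra h
  rw [s.colour_eq_false h] at hx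
  exact Bool.false_ne_true hx

theorem eq_of_colour_parent (hx : s.colour x = true) (hv0 : v ≠ 0) (hw0 : w ≠ 0)
    (hv : s.parent v = x) (hw : s.parent w = x) : v = w := by
  obtain ⟨a, ha⟩ := Set.ncard_eq_one.1 (s.ncard_children_of_colour hx)
  have hva : v ∈ ({a} : Set (Fin m)) := ha ▸ ⟨hv0, hv⟩
  have hwa : w ∈ ({a} : Set (Fin m)) := ha ▸ ⟨hw0, hw⟩
  rw [Set.mem_singleton_iff] at hva hwa
  rw [hva, hwa]

theorem exists_child_of_colour (hx : s.colour x = true) : ∃ w, w ≠ 0 ∧ s.parent w = x := by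
  obtain ⟨a, ha⟩ := Set.ncard_eq_one.1 (s.ncard_children_of_colour hx)
  exact ⟨a, (ha.symm ▸ Set.mem_singleton a : a ∈ {w : Fin m | w ≠ 0 ∧ s.parent w = x})⟩

-- `s.parent l < l` holds exactly when `l` is not the root, and makes the recursion well founded.
def block (l : Fin m) : Fin m :=
  if s.colour (s.parent l) = true ∧ s.parent l < l then block (s.parent l) else l
termination_by l

theorem block_of_colour_parent (h0 : l ≠ 0) (hc : s.colour (s.parent l) = true) :
    s.block l = s.block (s.parent l) := by
  rw [block, if_pos ⟨hc, s.parent_lt h0⟩]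

theorem block_of_not_colour_parent (hc : s.colour (s.parent l) = false) : s.block l = l := by
  rw [block, if_neg (by simp [hc])]

theorem block_zero : s.block 0 = 0 := by
  rw [block, if_neg (by simp [s.parent_zero])]

theorem block_le (l : Fin m) : s.block l ≤ l := by
  induction l using WellFoundedLT.induction with
  | _ l ih =>
    by_cases h0 : l = 0
    · rw [h0, s.block_zero]
    cases hc : s.colour (s.parent l)
    · rw [s.block_of_not_colour_parent hc]
    · rw [s.block_of_colour_parent h0 hc]
      exact (ih _ (s.parent_lt h0)).trans (s.parent_lt h0).le

theorem block_block (l : Fin m) : s.block (s.block l) = s.block l := by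
  induction l using WellFoundedLT.induction with
  | _ l ih =>
    by_cases h0 : l = 0
    · rw [h0, s.block_zero, s.block_zero]
    cases hc : s.colour (s.parent l)
    · rw [s.block_of_not_colour_parent hc, s.block_of_not_colour_parent hc]
    · rw [s.block_of_colour_parent h0 hc]
      exact ih _ (s.parent_lt h0)

theorem ne_zero_and_colour_parent_of_block_ne (h : s.block l ≠ l) :
    l ≠ 0 ∧ s.colour (s.parent l) = true := by
  refine ⟨fun h0 => h (h0 ▸ s.block_zero), ?_⟩
  by_contra hc
  exact h (s.block_of_not_colour_parent (Bool.eq_false_iff.2 hc))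

theorem colour_parent_of_block_eq (hv : s.block v = v) (h0 : v ≠ 0) :
    s.colour (s.parent v) = false := by
  refine Bool.eq_false_iff.2 fun hc => ?_
  have := (s.block_le _).trans_lt (s.parent_lt h0)
  rw [← s.block_of_colour_parent h0 hc, hv] at this
  exact lt_irrefl _ this

theorem block_ne_of_block_eq_of_lt (hb : s.block u = s.block w) (hlt : u < w) :
    s.block w ≠ w := by
  intro h
  have := s.block_le u
  rw [hb, h] at this
  exact (this.trans_lt hlt).false

def IsParent (a b : Fin m) : Prop := b ≠ 0 ∧ s.parent b = a

theorem IsParent.lt {s : OrderedIncreasingTreeBicolored m} (h : s.IsParent a b) : a < b :=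
  h.2 ▸ s.parent_lt h.1

theorem le_of_reflTransGen (h : Relation.ReflTransGen s.IsParent a b) : a ≤ b := by
  induction h with
  | refl => exact le_rfl
  | tail _ hbc ih => exact ih.trans hbc.lt.le

theorem transGen_of_block_eq_of_lt (hb : s.block u = s.block w) (hlt : u < w) :
    Relation.TransGen s.IsParent u w := by
  induction w using WellFoundedLT.induction generalizing u with
  | _ w ih =>
    obtain ⟨hw0, hc⟩ :=
      s.ne_zero_and_colour_parent_of_block_ne (s.block_ne_of_block_eq_of_lt hb hlt)
    have hpw : s.block (s.parent w) = s.block w := (s.block_of_colour_parent hw0 hc).symm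
    have hedge : s.IsParent (s.parent w) w := ⟨hw0, rfl⟩
    rcases lt_trichotomy u (s.parent w) with h | rfl | h
    · exact (ih _ (s.parent_lt hw0) (hb.trans hpw.symm) h).tail hedge
    · exact .single hedge
    · -- the black vertex `parent w` has `w` as its only child, so `w` would lie below `u`
      obtain ⟨b, hb', hbu⟩ := Relation.TransGen.head'_iff.1 (ih u hlt (hpw.trans hb.symm) h)
      obtain rfl : b = w := s.eq_of_colour_parent hc hb'.1 hw0 hb'.2 rfl
      exact absurd hlt (s.le_of_reflTransGen hbu).not_gt

theorem le_parent_of_block_eq_of_lt (hb : s.block u = s.block w) (hlt : u < w) :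
    u ≤ s.parent w := by
  obtain ⟨b, hub, hbw⟩ := Relation.TransGen.tail'_iff.1 (s.transGen_of_block_eq_of_lt hb hlt)
  exact hbw.2 ▸ s.le_of_reflTransGen hub

theorem colour_of_block_eq_of_lt (hb : s.block u = s.block w) (hlt : u < w) :
    s.colour u = true := by
  induction w using WellFoundedLT.induction with
  | _ w ih =>
    obtain ⟨hw0, hc⟩ :=
      s.ne_zero_and_colour_parent_of_block_ne (s.block_ne_of_block_eq_of_lt hb hlt)
    rcases (s.le_parent_of_block_eq_of_lt hb hlt).eq_or_lt with rfl | h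
    · exact hc
    · exact ih _ (s.parent_lt hw0) (hb.trans (s.block_of_colour_parent hw0 hc)) h

theorem le_of_block_eq_of_colour_eq_false (hx : s.colour x = false)
    (hu : s.block u = s.block x) : u ≤ x :=
  not_lt.1 fun h => Bool.false_ne_true (hx ▸ s.colour_of_block_eq_of_lt hu.symm h)

theorem eq_of_block_eq_of_colour_eq_false (hx : s.colour x = false) (hy : s.colour y = false)
    (h : s.block x = s.block y) : x = y :=
  le_antisymm (s.le_of_block_eq_of_colour_eq_false hy h)
    (s.le_of_block_eq_of_colour_eq_false hx h.symm)

def blockParent (l : Fin m) : Fin m := if s.block l = l then s.block (s.parent l) else l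

theorem blockParent_of_block_eq (hv : s.block v = v) : s.blockParent v = s.block (s.parent v) :=
  if_pos hv

theorem blockParent_of_block_ne (h : s.block l ≠ l) : s.blockParent l = l := if_neg h

theorem blockParent_zero : s.blockParent 0 = 0 := by
  rw [s.blockParent_of_block_eq s.block_zero, s.parent_zero, s.block_zero]

theorem block_blockParent (hv : s.block v = v) : s.block (s.blockParent v) = s.blockParent v := by
  rw [s.blockParent_of_block_eq hv, s.block_block]

theorem rank_of_block_ne (h : s.block l ≠ l) : s.rank l = 0 := by
  obtain ⟨h0, hc⟩ := s.ne_zero_and_colour_parent_of_block_ne h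
  have := s.rank_lt h0
  rw [s.ncard_children_of_colour hc] at this
  omega

theorem lt_of_block_eq_blockParent (hv : s.block v = v) (h0 : v ≠ 0)
    (hl : s.block l = s.blockParent v) : l < v := by
  rw [s.blockParent_of_block_eq hv] at hl
  exact (s.le_of_block_eq_of_colour_eq_false (s.colour_parent_of_block_eq hv h0) hl).trans_lt
    (s.parent_lt h0)

theorem blockParent_eq_iff (hv : s.block v = v) (h0 : v ≠ 0) (hw0 : w ≠ 0) :
    s.block w = w ∧ s.blockParent w = s.blockParent v ↔ s.parent w = s.parent v := by
  constructor
  · rintro ⟨hw, hp⟩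
    rw [s.blockParent_of_block_eq hw, s.blockParent_of_block_eq hv] at hp
    exact s.eq_of_block_eq_of_colour_eq_false (s.colour_parent_of_block_eq hw hw0)
      (s.colour_parent_of_block_eq hv h0) hp
  · intro hp
    have hw : s.block w = w :=
      s.block_of_not_colour_parent (hp ▸ s.colour_parent_of_block_eq hv h0)
    rw [s.blockParent_of_block_eq hw, s.blockParent_of_block_eq hv, hp]
    exact ⟨hw, rfl⟩

theorem rank_lt_ncard_blockParent (hv : s.block v = v) (h0 : v ≠ 0) :
    s.rank v <
      {w : Fin m | s.block w = w ∧ w ≠ 0 ∧ s.blockParent w = s.blockParent v}.ncard := by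
  have hchildren : {w : Fin m | s.block w = w ∧ w ≠ 0 ∧ s.blockParent w = s.blockParent v} =
      {w | w ≠ 0 ∧ s.parent w = s.parent v} := by
    ext w
    by_cases hw0 : w = 0
    · simp [hw0]
    · simp [hw0, ← s.blockParent_eq_iff hv h0 hw0]
  exact hchildren ▸ s.rank_lt h0

theorem eq_of_blockParent_eq_of_rank_eq (hv : s.block v = v) (hw : s.block w = w) (hv0 : v ≠ 0)
    (hw0 : w ≠ 0) (hp : s.blockParent v = s.blockParent w) (hr : s.rank v = s.rank w) : v = w :=
  s.eq_of_parent_eq_of_rank_eq hv0 hw0 ((s.blockParent_eq_iff hw hw0 hv0).1 ⟨hv, hp⟩) hr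

def contract : OrderedFreeMultilabelledIncreasingTree m :=
  ⟨(s.block, s.blockParent, s.rank), s.block_block, s.block_le, s.blockParent_zero, s.rank_zero,
    fun _ h => ⟨s.blockParent_of_block_ne h, s.rank_of_block_ne h⟩,
    fun _ hv h0 => ⟨s.block_blockParent hv,
      fun _ => s.lt_of_block_eq_blockParent hv h0⟩,
    fun _ => s.rank_lt_ncard_blockParent, fun _ _ => s.eq_of_blockParent_eq_of_rank_eq⟩

end OrderedIncreasingTreeBicolored

namespace OrderedFreeMultilabelledIncreasingTree

variable {m : ℕ} [NeZero m] (t : OrderedFreeMultilabelledIncreasingTree m)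

@[simp] theorem expand_parent : t.expand.parent = t.expandParent := rfl

theorem block_expand : t.expand.block = t.block := by
  funext l
  induction l using WellFoundedLT.induction with
  | _ l ih =>
    by_cases h0 : l = 0
    · rw [h0, OrderedIncreasingTreeBicolored.block_zero, t.block_zero]
    by_cases hl : t.block l = l
    · rw [t.expand.block_of_not_colour_parent (t.expandColour_expandParent_of_block_eq hl h0), hl]
    · rw [t.expand.block_of_colour_parent h0 (t.expandColour_expandParent_of_block_ne hl),
        expand_parent, ih _ (t.expandParent_lt h0), t.block_expandParent_of_block_ne hl]

theorem blockParent_expand : t.expand.blockParent = t.parent := by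
  funext l
  by_cases hl : t.block l = l
  · rw [t.expand.blockParent_of_block_eq (by rw [block_expand, hl]), block_expand]
    by_cases h0 : l = 0
    · subst h0
      exact (congrArg t.block t.expandParent_zero).trans (t.block_zero.trans t.parent_zero.symm)
    · exact t.block_expandParent_of_block_eq hl h0
  · rw [t.expand.blockParent_of_block_ne (by rwa [block_expand]), t.parent_of_block_ne hl]

end OrderedFreeMultilabelledIncreasingTree

namespace OrderedIncreasingTreeBicolored

variable {m : ℕ} [NeZero m] (s : OrderedIncreasingTreeBicolored m)

theorem expandParent_contract : s.contract.expandParent = s.parent := by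
  funext l
  by_cases h0 : l = 0
  · rw [h0, s.contract.expandParent_zero, s.parent_zero]
  by_cases hl : s.block l = l
  · rw [s.contract.expandParent_of_block_eq hl h0]
    refine le_antisymm ?_ (s.contract.le_maxLabel (s.blockParent_of_block_eq hl).symm)
    refine s.le_of_block_eq_of_colour_eq_false (s.colour_parent_of_block_eq hl h0) ?_
    exact (s.contract.block_maxLabel (s.block_blockParent hl)).trans (s.blockParent_of_block_eq hl)
  · rw [s.contract.expandParent_of_block_ne hl]
    obtain ⟨hb, hlt⟩ := s.contract.predLabel_spec hl
    obtain ⟨-, hc⟩ := s.ne_zero_and_colour_parent_of_block_ne hl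
    exact le_antisymm (s.le_parent_of_block_eq_of_lt hb hlt)
      (s.contract.le_predLabel (s.block_of_colour_parent h0 hc).symm (s.parent_lt h0))

theorem expandColour_contract : s.contract.expandColour = s.colour := by
  funext x
  cases hx : s.colour x
  · exact decide_eq_false fun ⟨u, hu, hxu⟩ =>
      (s.le_of_block_eq_of_colour_eq_false hx hu).not_gt hxu
  · obtain ⟨w, hw0, rfl⟩ := s.exists_child_of_colour hx
    exact decide_eq_true ⟨w, s.block_of_colour_parent hw0 hx, s.parent_lt hw0⟩

end OrderedIncreasingTreeBicolored

noncomputable def OrderedFreeMultilabelledIncreasingTree.equivBicolored (m : ℕ) [NeZero m] :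
    OrderedFreeMultilabelledIncreasingTree m ≃ OrderedIncreasingTreeBicolored m where
  toFun := expand
  invFun := OrderedIncreasingTreeBicolored.contract
  left_inv t := ext t.block_expand t.blockParent_expand rfl
  right_inv s := OrderedIncreasingTreeBicolored.ext s.expandParent_contract rfl
    s.expandColour_contract

theorem free_multilabelled_bijection_general (m : ℕ) [NeZero m] :
    Nonempty (OrderedFreeMultilabelledIncreasingTree m ≃
      OrderedIncreasingTreeBicolored m) :=
  ⟨OrderedFreeMultilabelledIncreasingTree.equivBicolored m⟩

/-- There is a bijection between ordered free multilabelled increasing trees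
with label set `{1,…,m}` and ordered increasing trees of size `m` in which
every vertex of out-degree `1` is coloured black or white. -/
theorem free_multilabelled_bijection (m : ℕ) [NeZero m] (hm : 1 ≤ m) :
    Nonempty (OrderedFreeMultilabelledIncreasingTree m ≃
      OrderedIncreasingTreeBicolored m) :=
  free_multilabelled_bijection_general m
end

section
/- The function T(z) = 2(1 - e^{√5 z}) / ((3-√5)e^{√5 z} - 3 - √5) satisfies T'(z) = 1 + 3T(z) + T(z)² with T(0)=0, and its Taylor coefficients T_m = m!·[z^m]T(z) are given by T_m = √5 · Σ_{k≥1} ((7-3√5)/2)^k · (√5·k)^m for m ≥ 1. -/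
/-!
Since `3 - √5 = (3 + √5) q` with `q = (7 - 3√5)/2`, the denominator factors and
`T(z) = (√5 - 3)/2 + √5 · w/(1 - w)` with `w = q e^{√5 z}`. Near `z = 0` we have `|w| < 1`, so
`T` is a constant plus `√5 ∑_{k≥1} q^k e^{√5 k z}`, a series of exponentials that is locally
dominated together with all its termwise derivatives; differentiating it `m` times and evaluating
at `0` gives the coefficients. The Riccati equation is a direct computation with the closed form.
-/

open Real Filter Topology Metric

noncomputable def expSeries (q a : ℝ) (m : ℕ) (z : ℝ) : ℝ :=
  ∑' k : ℕ, q ^ (k + 1) * (a * (k + 1)) ^ m * exp (a * (k + 1) * z)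

section ExpSeries

variable {q a : ℝ}

lemma summable_succ_pow_mul_geometric (m : ℕ) {ρ : ℝ} (hρ : ‖ρ‖ < 1) :
    Summable fun k : ℕ => ((k : ℝ) + 1) ^ m * ρ ^ (k + 1) := by
  refine ((summable_nat_add_iff (f := fun n : ℕ => (n : ℝ) ^ m * ρ ^ n) 1).2
    (summable_pow_mul_geometric_of_norm_lt_one m hρ)).congr fun k => ?_
  push_cast
  rfl

lemma hasDerivAt_expSeries_term (m k : ℕ) (z : ℝ) :
    HasDerivAt (fun y => q ^ (k + 1) * (a * (k + 1)) ^ m * exp (a * (k + 1) * y))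
      (q ^ (k + 1) * (a * (k + 1)) ^ (m + 1) * exp (a * (k + 1) * z)) z :=
  (((hasDerivAt_id' z).const_mul (a * (k + 1))).exp.const_mul
    (q ^ (k + 1) * (a * (k + 1)) ^ m)).congr_deriv (by ring)

lemma norm_expSeries_term_le (m k : ℕ) {y ρ : ℝ} (hy : |q| * exp (a * y) ≤ ρ) :
    ‖q ^ (k + 1) * (a * (k + 1)) ^ m * exp (a * (k + 1) * y)‖
      ≤ |a| ^ m * (((k : ℝ) + 1) ^ m * ρ ^ (k + 1)) := by
  have hexp : exp (a * (k + 1) * y) = exp (a * y) ^ (k + 1) := by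
    rw [← exp_nat_mul]; push_cast; ring_nf
  have hnorm : ‖q ^ (k + 1) * (a * (k + 1)) ^ m * exp (a * (k + 1) * y)‖
      = |a| ^ m * (((k : ℝ) + 1) ^ m * (|q| * exp (a * y)) ^ (k + 1)) := by
    rw [Real.norm_eq_abs, hexp, abs_mul, abs_mul, abs_pow, abs_pow, abs_pow, abs_mul,
      abs_of_pos (exp_pos _), abs_of_nonneg (by positivity : (0 : ℝ) ≤ k + 1), mul_pow, mul_pow]
    ring
  rw [hnorm]
  gcongr

lemma hasDerivAt_expSeries (m : ℕ) {z : ℝ} (hz : |q| * exp (a * z) < 1) :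
    HasDerivAt (expSeries q a m) (expSeries q a (m + 1) z) z := by
  obtain ⟨ρ, hzρ, hρ1⟩ := exists_between hz
  have hρ : ‖ρ‖ < 1 := by
    rwa [Real.norm_of_nonneg ((by positivity : 0 ≤ |q| * exp (a * z)).trans hzρ.le)]
  have hnear : ∀ᶠ y in 𝓝 z, |q| * exp (a * y) < ρ :=
    (by fun_prop : Continuous fun y => |q| * exp (a * y)).continuousAt.eventually_lt
      continuousAt_const hzρ
  obtain ⟨ε, hε, hball⟩ := Metric.eventually_nhds_iff_ball.1 hnear
  have hbound (n k : ℕ) (y : ℝ) (hy : y ∈ ball z ε) := norm_expSeries_term_le n k (hball y hy).le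
  exact hasDerivAt_tsum_of_isPreconnected
    ((summable_succ_pow_mul_geometric (m + 1) hρ).mul_left _) isOpen_ball isPreconnected_ball
    (fun k y _ => hasDerivAt_expSeries_term m k y) (hbound (m + 1)) (mem_ball_self hε)
    (.of_norm_bounded ((summable_succ_pow_mul_geometric m hρ).mul_left _)
      fun k => hbound m k z (mem_ball_self hε))
    (mem_ball_self hε)

lemma eventually_abs_mul_exp_lt_one {z : ℝ} (hz : |q| * exp (a * z) < 1) :
    ∀ᶠ y in 𝓝 z, |q| * exp (a * y) < 1 :=
  (by fun_prop : Continuous fun y => |q| * exp (a * y)).continuousAt.eventually_lt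
    continuousAt_const hz

lemma iteratedDeriv_expSeries_zero (m : ℕ) {z : ℝ} (hz : |q| * exp (a * z) < 1) :
    iteratedDeriv m (expSeries q a 0) z = expSeries q a m z := by
  induction m generalizing z with
  | zero => rfl
  | succ m ih =>
    rw [iteratedDeriv_succ,
      EventuallyEq.deriv_eq ((eventually_abs_mul_exp_lt_one hz).mono fun y hy => ih hy)]
    exact (hasDerivAt_expSeries m hz).deriv

lemma expSeries_zero_eq {z : ℝ} (hz : |q| * exp (a * z) < 1) :
    expSeries q a 0 z = q * exp (a * z) / (1 - q * exp (a * z)) := by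
  have hw : ‖q * exp (a * z)‖ < 1 := by
    rwa [norm_mul, Real.norm_eq_abs, Real.norm_of_nonneg (exp_pos _).le]
  calc expSeries q a 0 z = ∑' k : ℕ, q * exp (a * z) * (q * exp (a * z)) ^ k := by
        refine tsum_congr fun k => ?_
        rw [pow_zero, mul_one, show a * (k + 1) * z = (k + 1 : ℕ) * (a * z) by push_cast; ring,
          exp_nat_mul]
        ring
    _ = _ := by rw [tsum_mul_left, tsum_geometric_of_norm_lt_one hw, div_eq_mul_inv]

end ExpSeries

noncomputable def binaryFreeEGF (z : ℝ) : ℝ :=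
  2 * (1 - exp (√5 * z)) / ((3 - √5) * exp (√5 * z) - 3 - √5)

lemma abs_seven_sub_three_sqrt_five_div_two_lt_one : |(7 - 3 * √5) / 2| < 1 := by
  have h5 := Real.sq_sqrt (show (0 : ℝ) ≤ 5 by norm_num)
  have := Real.sqrt_nonneg 5
  rw [abs_lt]
  constructor <;> nlinarith

lemma binaryFreeEGF_eq_expSeries {z : ℝ} (hz : |(7 - 3 * √5) / 2| * exp (√5 * z) < 1) :
    binaryFreeEGF z = (√5 - 3) / 2 + √5 * expSeries ((7 - 3 * √5) / 2) √5 0 z := by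
  have h5 := Real.sq_sqrt (show (0 : ℝ) ≤ 5 by norm_num)
  have hq : (3 + √5) * ((7 - 3 * √5) / 2) = 3 - √5 := by linear_combination (-3 / 2 : ℝ) * h5
  rw [binaryFreeEGF, expSeries_zero_eq hz]
  generalize (7 - 3 * √5) / 2 = q at hz hq ⊢
  have hu := exp_pos (√5 * z)
  generalize exp (√5 * z) = u at hu hz ⊢
  have hqu : u * q < 1 := by nlinarith [le_abs_self q]
  have hden : (3 - √5) * u - 3 - √5 = (3 + √5) * (u * q - 1) := by linear_combination -u * hq
  have h1 : u * q - 1 ≠ 0 := by linarith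
  have h1' : 1 - u * q ≠ 0 := by linarith
  rw [hden]
  field_simp
  linear_combination (1 - u * q) * (1 - u) * h5 + (1 - u * q) * (3 + √5) * u * hq

lemma hasDerivAt_binaryFreeEGF {z : ℝ} (hD : (3 - √5) * exp (√5 * z) - 3 - √5 ≠ 0) :
    HasDerivAt binaryFreeEGF (1 + 3 * binaryFreeEGF z + binaryFreeEGF z ^ 2) z := by
  have h5 := Real.sq_sqrt (show (0 : ℝ) ≤ 5 by norm_num)
  have hexp : HasDerivAt (fun y => exp (√5 * y)) (exp (√5 * z) * √5) z := by
    simpa using ((hasDerivAt_id' z).const_mul √5).exp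
  refine (((hexp.const_sub 1).const_mul 2).div
    (((hexp.const_mul (3 - √5)).sub_const 3).sub_const √5) hD).congr_deriv ?_
  rw [binaryFreeEGF]
  set u := exp (√5 * z)
  have hD' : u * (3 - √5) - 3 - √5 ≠ 0 := by rwa [mul_comm]
  field_simp
  linear_combination (2 * u - u ^ 2 - 1) * h5

lemma iteratedDeriv_binaryFreeEGF_zero {m : ℕ} (hm : 0 < m) :
    iteratedDeriv m binaryFreeEGF 0
      = √5 * ∑' k : ℕ, ((7 - 3 * √5) / 2) ^ (k + 1) * (√5 * (k + 1)) ^ m := by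
  have h0 : |(7 - 3 * √5) / 2| * exp (√5 * 0) < 1 := by
    simpa using abs_seven_sub_three_sqrt_five_div_two_lt_one
  calc iteratedDeriv m binaryFreeEGF 0
      = iteratedDeriv m (fun z => (√5 - 3) / 2 + √5 * expSeries ((7 - 3 * √5) / 2) √5 0 z) 0 :=
        (EventuallyEq.iteratedDeriv ((eventually_abs_mul_exp_lt_one h0).mono
          fun y hy => binaryFreeEGF_eq_expSeries hy) m).eq_of_nhds
    _ = √5 * expSeries ((7 - 3 * √5) / 2) √5 m 0 := by
        rw [iteratedDeriv_const_add hm, iteratedDeriv_const_mul_field,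
          iteratedDeriv_expSeries_zero m h0]
    _ = _ := by simp only [expSeries, mul_zero, exp_zero, mul_one]

/-- The EGF of binary free multilabelled increasing trees,
`T(z) = 2(1 - e^{√5 z}) / ((3-√5)e^{√5 z} - 3 - √5)`, satisfies
`T' = 1 + 3T + T²` with `T(0) = 0` (the ODE wherever the denominator is
nonzero), and its Taylor coefficients `T_m = m!·[z^m]T = (d/dz)^m T(0)` are
`T_m = √5 · ∑_{k≥1} ((7-3√5)/2)^k (√5 k)^m` for `m ≥ 1`. -/
theorem binary_free_multilabelled_egf :
    (fun z : ℝ =>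
        2 * (1 - Real.exp (Real.sqrt 5 * z)) /
          ((3 - Real.sqrt 5) * Real.exp (Real.sqrt 5 * z) - 3 - Real.sqrt 5)) 0 = 0 ∧
    (∀ z : ℝ, (3 - Real.sqrt 5) * Real.exp (Real.sqrt 5 * z) - 3 - Real.sqrt 5 ≠ 0 →
      deriv (fun z : ℝ =>
        2 * (1 - Real.exp (Real.sqrt 5 * z)) /
          ((3 - Real.sqrt 5) * Real.exp (Real.sqrt 5 * z) - 3 - Real.sqrt 5)) z
        = 1 + 3 * (2 * (1 - Real.exp (Real.sqrt 5 * z)) /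
              ((3 - Real.sqrt 5) * Real.exp (Real.sqrt 5 * z) - 3 - Real.sqrt 5))
            + (2 * (1 - Real.exp (Real.sqrt 5 * z)) /
              ((3 - Real.sqrt 5) * Real.exp (Real.sqrt 5 * z) - 3 - Real.sqrt 5)) ^ 2) ∧
    ∀ m : ℕ, 1 ≤ m →
      iteratedDeriv m (fun z : ℝ =>
        2 * (1 - Real.exp (Real.sqrt 5 * z)) /
          ((3 - Real.sqrt 5) * Real.exp (Real.sqrt 5 * z) - 3 - Real.sqrt 5)) 0
        = Real.sqrt 5 * ∑' k : ℕ,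
            ((7 - 3 * Real.sqrt 5) / 2) ^ (k + 1) * (Real.sqrt 5 * (k + 1)) ^ m :=
  ⟨by simp, fun _ hD => (hasDerivAt_binaryFreeEGF hD).deriv,
    fun _ hm => iteratedDeriv_binaryFreeEGF_zero hm⟩
end

section
/- Let Q(z) be a formal power series with Q(0)=0, Q'(0)=1 satisfying Q''(z) = Q'(z)(Q(z) + Q'(z)). Then Q'(z) = 2e^{Q(z)} - Q(z) - 1. -/
/-!
Write `E = e^Q`. By the chain rule `E' = E Q'`, so `R = Q' - (2E - Q - 1)` satisfies
`R' = Q'' - 2EQ' + Q' = Q'(Q + Q' - 2E + 1) = Q' R`, and `R(0) = 1 - (2 - 0 - 1) = 0`.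
A power series solving a homogeneous linear first-order equation with zero constant term
vanishes: comparing coefficients, `(n + 1) r_{n+1}` is a combination of `r_0, …, r_n`.
-/

open PowerSeries

theorem PowerSeries.eq_zero_of_derivative_eq_mul_self {R : Type*} [CommRing R]
    [IsAddTorsionFree R] {f a : R⟦X⟧} (hf : d⁄dX R f = a * f) (h0 : constantCoeff f = 0) :
    f = 0 := by
  ext n
  induction n using Nat.strong_induction_on with
  | _ n ih =>
    cases n with
    | zero => simpa using h0
    | succ n =>
      have hlow : coeff n (a * f) = 0 := by
        rw [coeff_mul]
        exact Finset.sum_eq_zero fun p hp => by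
          rw [ih p.2 (Finset.Nat.antidiagonal.snd_lt hp), map_zero, mul_zero]
      have h : (n + 1) • coeff (n + 1) f = (n + 1) • (0 : R) := by
        rw [smul_zero, nsmul_eq_mul, mul_comm, Nat.cast_succ, ← coeff_derivative, hf, hlow]
      simpa using (smul_right_inj (Nat.succ_ne_zero n)).mp h

theorem psComp_eq_subst (φ : ℝ⟦X⟧) {T : ℝ⟦X⟧} (hT : constantCoeff T = 0) :
    psComp φ T = φ.subst T := by
  ext n
  rw [psComp, coeff_mk, coeff_subst' (HasSubst.of_constantCoeff_zero' hT)]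
  simp only [smul_eq_mul]
  refine (finsum_eq_sum_of_support_subset _ fun j hj => ?_).symm
  by_contra hjn
  have hnj : (n : ℕ∞) < j := Nat.cast_lt.mpr (by simpa using hjn)
  exact hj (mul_eq_zero_of_right _
    (coeff_of_lt_order n (hnj.trans_le (le_order_pow_of_constantCoeff_eq_zero j hT))))

theorem derivative_psComp_exp {T : ℝ⟦X⟧} (hT : constantCoeff T = 0) :
    d⁄dX ℝ (psComp (exp ℝ) T) = psComp (exp ℝ) T * d⁄dX ℝ T := by
  rw [psComp_eq_subst _ hT, derivative_subst (HasSubst.of_constantCoeff_zero' hT), derivative_exp]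

theorem constantCoeff_psComp (φ T : ℝ⟦X⟧) : constantCoeff (psComp φ T) = constantCoeff φ := by
  rw [← coeff_zero_eq_constantCoeff_apply, ← coeff_zero_eq_constantCoeff_apply, psComp, coeff_mk]
  simp

/-- If `Q` is a formal power series with `Q(0) = 0`, `Q'(0) = 1` satisfying
`Q'' = Q'(Q + Q')`, then `Q' = 2 e^Q - Q - 1`. -/
theorem unilabelled_bilabelled_first_order_reduction
    (Q : PowerSeries ℝ)
    (h0 : PowerSeries.constantCoeff Q = 0)
    (h1 : PowerSeries.coeff 1 Q = 1)
    (hODE : PowerSeries.derivative ℝ (PowerSeries.derivative ℝ Q)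
      = PowerSeries.derivative ℝ Q * (Q + PowerSeries.derivative ℝ Q)) :
    PowerSeries.derivative ℝ Q = 2 * psComp (PowerSeries.exp ℝ) Q - Q - 1 := by
  set E := psComp (exp ℝ) Q
  set D := d⁄dX ℝ Q
  have hR : d⁄dX ℝ (D - (2 * E - Q - 1)) = D * (D - (2 * E - Q - 1)) := by
    have hE : d⁄dX ℝ E = E * D := derivative_psComp_exp h0
    rw [map_sub, map_sub, map_sub, hODE, two_mul, map_add, hE, Derivation.map_one_eq_zero]
    ring
  have hR0 : constantCoeff (D - (2 * E - Q - 1)) = 0 := by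
    have hD0 : constantCoeff D = 1 := by
      simp [D, ← coeff_zero_eq_constantCoeff_apply, coeff_derivative, h1]
    norm_num [hD0, E, constantCoeff_psComp, h0, map_ofNat]
  exact sub_eq_zero.mp (eq_zero_of_derivative_eq_mul_self hR hR0)
end
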